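/- arXiv:2011.11149 — 7 statements merged into one kernel-verified Lean document; each statement's English description precedes it below -/
import Mathlib

section
/- Assume setting (C1) and let f_n ∈ C(A_n) for each n ≥ 1. If the family {f_n}_{n≥1} is uniformly bounded and equicontinuous, then there exist a strictly increasing sequence of indices n_1 < n_2 < ⋯ and a continuous function f ∈ C(A) such that f_{n_k} ⇀ f, i.e. for every x ∈ A and every sequence of points x_k ∈ A_{n_k} with x_k → x in B one has f_{n_k}(x_k) → f(x). -/
open Filter Topology

/-- Under setting (C1), a uniformly bounded and equicontinuous
sequence of continuous functions `f n ∈ C(A n)` has a subsequence converging,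
in the sense `f_{n_k} ⇀ f`, to some `f ∈ C(A)`. -/
theorem stmt0 {B : Type*} [MetricSpace B] [CompactSpace B]
    (A : ℕ → Set B) (Ainf : Set B)
    (hAc : ∀ n, IsCompact (A n)) (hAne : ∀ n, (A n).Nonempty)
    (hAinfc : IsCompact Ainf) (hAinfne : Ainf.Nonempty)
    (hH : Tendsto (fun n => Metric.hausdorffDist (A n) Ainf) atTop (𝓝 0))
    (f : ℕ → B → ℝ) (hfc : ∀ n, ContinuousOn (f n) (A n))
    (hbd : ∃ M : ℝ, ∀ n, ∀ x ∈ A n, |f n x| ≤ M)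
    (heq : ∀ ε > (0:ℝ), ∃ δ > (0:ℝ), ∀ n, ∀ x ∈ A n, ∀ y ∈ A n,
      dist x y < δ → |f n x - f n y| < ε) :
    ∃ φ : ℕ → ℕ, StrictMono φ ∧ ∃ g : B → ℝ, ContinuousOn g Ainf ∧
      ∀ x ∈ Ainf, ∀ xs : ℕ → B, (∀ k, xs k ∈ A (φ k)) →
        Tendsto xs atTop (𝓝 x) →
        Tendsto (fun k => f (φ k) (xs k)) atTop (𝓝 (g x)) := by
  classical
  obtain ⟨M, hM⟩ := hbd
  -- a dense sequence in Ainf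
  have hcs : CompactSpace ↥Ainf := isCompact_iff_compactSpace.mp hAinfc
  have hne : Nonempty ↥Ainf := hAinfne.to_subtype
  obtain ⟨qq, hqq⟩ := TopologicalSpace.exists_dense_seq ↥Ainf
  set q : ℕ → B := fun j => (qq j : B) with hqdef
  have hqmem : ∀ j, q j ∈ Ainf := fun j => (qq j).2
  have hqdense : ∀ x ∈ Ainf, ∀ ε > (0:ℝ), ∃ j, dist (q j) x < ε := by
    intro x hx ε hε
    obtain ⟨j, hj⟩ := hqq.exists_dist_lt (⟨x, hx⟩ : ↥Ainf) hε
    refine ⟨j, ?_⟩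
    rw [dist_comm]
    simpa [Subtype.dist_eq] using hj
  -- nearby points in A n
  set H : ℕ → ℝ := fun n => Metric.hausdorffDist (A n) Ainf with hHdef
  have hHe : ∀ n, EMetric.hausdorffEdist Ainf (A n) ≠ ⊤ := fun n =>
    Metric.hausdorffEdist_ne_top_of_nonempty_of_bounded hAinfne (hAne n)
      hAinfc.isBounded (hAc n).isBounded
  have hp : ∀ n j, ∃ y ∈ A n, dist (q j) y < H n + 1/(n+1) := by
    intro n j
    refine Metric.exists_dist_lt_of_hausdorffDist_lt (hqmem j) ?_ (hHe n)
    rw [Metric.hausdorffDist_comm]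
    have : (0:ℝ) < 1/(n+1) := by positivity
    linarith
  choose p hpA hpd using hp
  -- diagonal extraction via compactness of the product
  have hMc : IsCompact (Set.univ.pi fun _ : ℕ => Set.Icc (-M) M) :=
    isCompact_univ_pi fun _ => isCompact_Icc
  have hmem : ∀ n, (fun j => f n (p n j)) ∈ Set.univ.pi fun _ : ℕ => Set.Icc (-M) M := by
    intro n j _
    have := hM n _ (hpA n j)
    rw [abs_le] at this
    exact ⟨this.1, this.2⟩
  obtain ⟨L, _, φ, hφ, hconv⟩ := hMc.tendsto_subseq hmem
  have hLj : ∀ j, Tendsto (fun k => f (φ k) (p (φ k) j)) atTop (𝓝 (L j)) := by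
    intro j
    have := tendsto_pi_nhds.mp hconv j
    simpa [Function.comp] using this
  -- the projection errors tend to 0 along φ
  have hHφ : Tendsto (fun k => H (φ k) + 1/((φ k : ℝ)+1)) atTop (𝓝 0) := by
    have h1 : Tendsto (fun k => H (φ k)) atTop (𝓝 0) := hH.comp hφ.tendsto_atTop
    have h2 : Tendsto (fun k => 1/((φ k : ℝ)+1)) atTop (𝓝 0) :=
      tendsto_one_div_add_atTop_nhds_zero_nat.comp hφ.tendsto_atTop
    simpa using h1.add h2
  have hpq0 : ∀ j, Tendsto (fun k => dist (q j) (p (φ k) j)) atTop (𝓝 0) := by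
    intro j
    exact squeeze_zero (fun k => dist_nonneg) (fun k => (hpd (φ k) j).le) hHφ
  -- Cauchy property for any admissible sequence converging to x ∈ Ainf
  have hCauchy : ∀ x ∈ Ainf, ∀ xs : ℕ → B, (∀ k, xs k ∈ A (φ k)) →
      Tendsto xs atTop (𝓝 x) → CauchySeq (fun k => f (φ k) (xs k)) := by
    intro x hx xs hxs hxt
    rw [Metric.cauchySeq_iff]
    intro ε hε
    obtain ⟨δ, hδ, hheq⟩ := heq (ε/3) (by linarith)
    obtain ⟨j, hj⟩ := hqdense x hx (δ/3) (by linarith)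
    have hu : CauchySeq (fun k => f (φ k) (p (φ k) j)) := (hLj j).cauchySeq
    rw [Metric.cauchySeq_iff] at hu
    obtain ⟨N1, hN1⟩ := hu (ε/3) (by linarith)
    -- eventually dist (xs k) (p (φ k) j) < δ
    have hev : ∀ᶠ k in atTop, dist (xs k) (p (φ k) j) < δ := by
      have e1 : ∀ᶠ k in atTop, dist (xs k) x < δ/3 :=
        (tendsto_iff_dist_tendsto_zero.mp hxt).eventually (gt_mem_nhds (by linarith))
      have e2 : ∀ᶠ k in atTop, dist (q j) (p (φ k) j) < δ/3 :=
        (hpq0 j).eventually (gt_mem_nhds (by linarith))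
      filter_upwards [e1, e2] with k h1 h2
      calc dist (xs k) (p (φ k) j) ≤ dist (xs k) x + dist x (q j) + dist (q j) (p (φ k) j) :=
            dist_triangle4 _ _ _ _
        _ < δ/3 + δ/3 + δ/3 := by
            have : dist x (q j) < δ/3 := by rw [dist_comm]; exact hj
            linarith
        _ = δ := by ring
    obtain ⟨N2, hN2⟩ := eventually_atTop.mp hev
    refine ⟨max N1 N2, fun m hm n hn => ?_⟩
    have hm1 := le_of_max_le_left hm
    have hm2 := le_of_max_le_right hm
    have hn1 := le_of_max_le_left hn
    have hn2 := le_of_max_le_right hn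
    have dm : |f (φ m) (xs m) - f (φ m) (p (φ m) j)| < ε/3 :=
      hheq (φ m) _ (hxs m) _ (hpA (φ m) j) (hN2 m hm2)
    have dn : |f (φ n) (xs n) - f (φ n) (p (φ n) j)| < ε/3 :=
      hheq (φ n) _ (hxs n) _ (hpA (φ n) j) (hN2 n hn2)
    have dmn : dist (f (φ m) (p (φ m) j)) (f (φ n) (p (φ n) j)) < ε/3 := hN1 m hm1 n hn1
    rw [Real.dist_eq] at dmn ⊢
    have t1 := abs_sub_le (f (φ m) (xs m)) (f (φ m) (p (φ m) j)) (f (φ n) (xs n))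
    have t2 := abs_sub_le (f (φ m) (p (φ m) j)) (f (φ n) (p (φ n) j)) (f (φ n) (xs n))
    have dn' : |f (φ n) (p (φ n) j) - f (φ n) (xs n)| < ε/3 := by
      rw [abs_sub_comm]; exact dn
    linarith
  -- canonical approximating sequence for each x ∈ Ainf
  have hjx : ∀ x, x ∈ Ainf → ∀ k : ℕ, ∃ j, dist (q j) x < 1/((k:ℝ)+1) := by
    intro x hx k
    exact hqdense x hx _ (by positivity)
  choose jx hjxd using hjx
  set y : (x : B) → x ∈ Ainf → ℕ → B := fun x hx k => p (φ k) (jx x hx k) with hydef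
  have hymem : ∀ x (hx : x ∈ Ainf) k, y x hx k ∈ A (φ k) := fun x hx k => hpA _ _
  have hyd : ∀ x (hx : x ∈ Ainf), Tendsto (fun k => dist (y x hx k) x) atTop (𝓝 0) := by
    intro x hx
    have hub : ∀ k, dist (y x hx k) x ≤ (H (φ k) + 1/((φ k : ℝ)+1)) + 1/((k:ℝ)+1) := by
      intro k
      calc dist (y x hx k) x ≤ dist (y x hx k) (q (jx x hx k)) + dist (q (jx x hx k)) x :=
            dist_triangle _ _ _
        _ ≤ (H (φ k) + 1/((φ k : ℝ)+1)) + 1/((k:ℝ)+1) := by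
            have h1 : dist (y x hx k) (q (jx x hx k)) ≤ H (φ k) + 1/((φ k : ℝ)+1) := by
              rw [dist_comm]; exact (hpd (φ k) (jx x hx k)).le
            have h2 := (hjxd x hx k).le
            linarith
    have hT : Tendsto (fun k => (H (φ k) + 1/((φ k : ℝ)+1)) + 1/((k:ℝ)+1)) atTop (𝓝 0) := by
      simpa using hHφ.add tendsto_one_div_add_atTop_nhds_zero_nat
    exact squeeze_zero (fun k => dist_nonneg) hub hT
  have hyt : ∀ x (hx : x ∈ Ainf), Tendsto (fun k => y x hx k) atTop (𝓝 x) := fun x hx =>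
    tendsto_iff_dist_tendsto_zero.mpr (hyd x hx)
  have hlim : ∀ x (hx : x ∈ Ainf), ∃ l, Tendsto (fun k => f (φ k) (y x hx k)) atTop (𝓝 l) :=
    fun x hx => cauchySeq_tendsto_of_complete
      (hCauchy x hx _ (hymem x hx) (hyt x hx))
  set g : B → ℝ := fun x => if hx : x ∈ Ainf then Classical.choose (hlim x hx) else 0 with hgdef
  have hg : ∀ x (hx : x ∈ Ainf), Tendsto (fun k => f (φ k) (y x hx k)) atTop (𝓝 (g x)) := by
    intro x hx
    have : g x = Classical.choose (hlim x hx) := by rw [hgdef]; exact dif_pos hx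
    rw [this]
    exact Classical.choose_spec (hlim x hx)
  refine ⟨φ, hφ, g, ?_, ?_⟩
  · -- continuity of g on Ainf
    rw [Metric.continuousOn_iff]
    intro x hx ε hε
    obtain ⟨δ, hδ, hheq⟩ := heq (ε/2) (by linarith)
    refine ⟨δ/2, by linarith, fun x' hx' hd => ?_⟩
    have hbound : |g x' - g x| ≤ ε/2 := by
      have htend : Tendsto (fun k => |f (φ k) (y x' hx' k) - f (φ k) (y x hx k)|) atTop
          (𝓝 |g x' - g x|) := ((hg x' hx').sub (hg x hx)).abs
      refine le_of_tendsto htend ?_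
      have e1 : ∀ᶠ k in atTop, dist (y x' hx' k) x' < δ/4 :=
        (hyd x' hx').eventually (gt_mem_nhds (by linarith))
      have e2 : ∀ᶠ k in atTop, dist (y x hx k) x < δ/4 :=
        (hyd x hx).eventually (gt_mem_nhds (by linarith))
      filter_upwards [e1, e2] with k h1 h2
      have hdd : dist (y x' hx' k) (y x hx k) < δ := by
        calc dist (y x' hx' k) (y x hx k)
            ≤ dist (y x' hx' k) x' + dist x' x + dist x (y x hx k) := dist_triangle4 _ _ _ _
          _ < δ/4 + δ/2 + δ/4 := by
              have : dist x (y x hx k) < δ/4 := by rw [dist_comm]; exact h2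
              linarith
          _ = δ := by ring
      exact (hheq (φ k) _ (hymem x' hx' k) _ (hymem x hx k) hdd).le
    rw [Real.dist_eq]
    calc |g x' - g x| ≤ ε/2 := hbound
      _ < ε := by linarith
  · -- convergence along the subsequence
    intro x hx xs hxs hxt
    have hdiff : Tendsto (fun k => f (φ k) (xs k) - f (φ k) (y x hx k)) atTop (𝓝 0) := by
      rw [NormedAddCommGroup.tendsto_nhds_zero]
      intro ε hε
      obtain ⟨δ, hδ, hheq⟩ := heq ε hε
      have e1 : ∀ᶠ k in atTop, dist (xs k) x < δ/2 :=
        (tendsto_iff_dist_tendsto_zero.mp hxt).eventually (gt_mem_nhds (by linarith))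
      have e2 : ∀ᶠ k in atTop, dist (y x hx k) x < δ/2 :=
        (hyd x hx).eventually (gt_mem_nhds (by linarith))
      filter_upwards [e1, e2] with k h1 h2
      have hdd : dist (xs k) (y x hx k) < δ := by
        calc dist (xs k) (y x hx k) ≤ dist (xs k) x + dist x (y x hx k) := dist_triangle _ _ _
          _ < δ/2 + δ/2 := by
              have : dist x (y x hx k) < δ/2 := by rw [dist_comm]; exact h2
              linarith
          _ = δ := by ring
      simpa [Real.norm_eq_abs] using hheq (φ k) _ (hxs k) _ (hymem x hx k) hdd
    have := hdiff.add (hg x hx)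
    simpa using this
end

section
/- Assume setting (C1), let f_n ∈ C(A_n) for each n ≥ 1 and let f : A → ℝ. If f_n ⇀ f, then the family {f_n}_{n≥1} is uniformly bounded and equicontinuous, and f is continuous on A. -/
open Filter Topology

section Helpers

open Metric

variable {B : Type*} [MetricSpace B] [CompactSpace B]

variable {B : Type*} [MetricSpace B] [CompactSpace B]

lemma edist_ne_top' {s t : Set B} (hs : s.Nonempty) (ht : t.Nonempty) :
    EMetric.hausdorffEdist s t ≠ ⊤ :=
  Metric.hausdorffEdist_ne_top_of_nonempty_of_bounded hs ht
    (isCompact_univ.isBounded.subset (Set.subset_univ s))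
    (isCompact_univ.isBounded.subset (Set.subset_univ t))

/-- nearest point selection: for x ∈ Ainf there is a point of A n within hausdorffDist. -/
lemma near_pt (A : ℕ → Set B) (Ainf : Set B)
    (hAc : ∀ n, IsCompact (A n)) (hAne : ∀ n, (A n).Nonempty)
    (hAinfne : Ainf.Nonempty) {x : B} (hx : x ∈ Ainf) (n : ℕ) :
    ∃ y ∈ A n, dist x y ≤ Metric.hausdorffDist (A n) Ainf := by
  obtain ⟨y, hy, hdy⟩ := (hAc n).exists_infDist_eq_dist (hAne n) x
  refine ⟨y, hy, ?_⟩
  rw [← hdy, Metric.hausdorffDist_comm]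
  exact Metric.infDist_le_hausdorffDist_of_mem hx (edist_ne_top' hAinfne (hAne n))

/-- limit of points of A (e k) with e → ∞ lies in Ainf. -/
lemma lim_mem (A : ℕ → Set B) (Ainf : Set B)
    (hAinfc : IsCompact Ainf) (hAinfne : Ainf.Nonempty)
    (hAne : ∀ n, (A n).Nonempty)
    (hH : Tendsto (fun n => Metric.hausdorffDist (A n) Ainf) atTop (𝓝 0))
    {e : ℕ → ℕ} (he : Tendsto e atTop atTop) {u : ℕ → B}
    (hu : ∀ k, u k ∈ A (e k)) {p : B} (hup : Tendsto u atTop (𝓝 p)) : p ∈ Ainf := by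
  rw [hAinfc.isClosed.mem_iff_infDist_zero hAinfne]
  have h1 : ∀ k, Metric.infDist p Ainf ≤
      Metric.infDist (u k) Ainf + dist p (u k) := fun k =>
    Metric.infDist_le_infDist_add_dist
  have h2 : ∀ k, Metric.infDist (u k) Ainf ≤ Metric.hausdorffDist (A (e k)) Ainf := fun k =>
    Metric.infDist_le_hausdorffDist_of_mem (hu k) (edist_ne_top' (hAne _) hAinfne)
  have hd : Tendsto (fun k => dist p (u k)) atTop (𝓝 0) := by
    simpa [dist_comm] using tendsto_iff_dist_tendsto_zero.1 hup
  have hlim : Tendsto (fun k => Metric.hausdorffDist (A (e k)) Ainf + dist p (u k))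
      atTop (𝓝 0) := by simpa using (hH.comp he).add hd
  have hle : Metric.infDist p Ainf ≤ 0 :=
    le_of_tendsto_of_tendsto' tendsto_const_nhds hlim fun k =>
      (h1 k).trans (by gcongr; exact h2 k)
  exact le_antisymm hle Metric.infDist_nonneg

/-- Workhorse: along a strictly monotone subsequence with converging points,
`f (e k) (u k)` converges to `g p` and `p ∈ Ainf`. -/
lemma workhorse (A : ℕ → Set B) (Ainf : Set B)
    (hAc : ∀ n, IsCompact (A n)) (hAne : ∀ n, (A n).Nonempty)
    (hAinfc : IsCompact Ainf) (hAinfne : Ainf.Nonempty)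
    (hH : Tendsto (fun n => Metric.hausdorffDist (A n) Ainf) atTop (𝓝 0))
    (f : ℕ → B → ℝ) (g : B → ℝ)
    (hconv : ∀ x ∈ Ainf, ∀ xs : ℕ → B, (∀ n, xs n ∈ A n) →
      Tendsto xs atTop (𝓝 x) →
      Tendsto (fun n => f n (xs n)) atTop (𝓝 (g x)))
    {e : ℕ → ℕ} (he : StrictMono e) {u : ℕ → B}
    (hu : ∀ k, u k ∈ A (e k)) {p : B} (hup : Tendsto u atTop (𝓝 p)) :
    p ∈ Ainf ∧ Tendsto (fun k => f (e k) (u k)) atTop (𝓝 (g p)) := by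
  have hpA : p ∈ Ainf := lim_mem A Ainf hAinfc hAinfne hAne hH he.tendsto_atTop hu hup
  -- nearest points to p
  choose pt hptA hptd using fun n => near_pt A Ainf hAc hAne hAinfne hpA n
  -- splice the sequence
  classical
  set z : ℕ → B := fun n => if h : ∃ k, e k = n then u h.choose else pt n with hz
  have hzk : ∀ k, z (e k) = u k := by
    intro k
    have h : ∃ k', e k' = e k := ⟨k, rfl⟩
    simp only [hz, dif_pos h]
    congr 1
    exact he.injective h.choose_spec
  have hzA : ∀ n, z n ∈ A n := by
    intro n
    by_cases h : ∃ k, e k = n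
    · simp only [hz, dif_pos h]
      have := hu h.choose
      rwa [h.choose_spec] at this
    · simp only [hz, dif_neg h]; exact hptA n
  have hzp : Tendsto z atTop (𝓝 p) := by
    rw [Metric.tendsto_atTop]
    intro ε hε
    rw [Metric.tendsto_atTop] at hup
    obtain ⟨K1, hK1⟩ := hup ε hε
    have hH' := (Metric.tendsto_atTop).1 hH
    obtain ⟨N2, hN2⟩ := hH' ε hε
    refine ⟨max (e K1) N2, fun n hn => ?_⟩
    by_cases h : ∃ k, e k = n
    · simp only [hz, dif_pos h]
      apply hK1
      have : e K1 ≤ e h.choose := by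
        rw [h.choose_spec]; exact le_trans (le_max_left _ _) hn
      exact (he.le_iff_le).1 this
    · simp only [hz, dif_neg h]
      have h1 : dist p (pt n) ≤ Metric.hausdorffDist (A n) Ainf := hptd n
      have h2 : Metric.hausdorffDist (A n) Ainf < ε := by
        have := hN2 n (le_trans (le_max_right _ _) hn)
        rw [Real.dist_eq, sub_zero] at this
        exact lt_of_le_of_lt (le_abs_self _) this
      rw [dist_comm]
      exact lt_of_le_of_lt h1 h2
  have := (hconv p hpA z hzA hzp).comp he.tendsto_atTop
  refine ⟨hpA, this.congr fun k => ?_⟩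
  simp [Function.comp, hzk k]

lemma unif_bdd (A : ℕ → Set B) (Ainf : Set B)
    (hAc : ∀ n, IsCompact (A n)) (hAne : ∀ n, (A n).Nonempty)
    (hAinfc : IsCompact Ainf) (hAinfne : Ainf.Nonempty)
    (hH : Tendsto (fun n => Metric.hausdorffDist (A n) Ainf) atTop (𝓝 0))
    (f : ℕ → B → ℝ) (hfc : ∀ n, ContinuousOn (f n) (A n))
    (g : B → ℝ)
    (hconv : ∀ x ∈ Ainf, ∀ xs : ℕ → B, (∀ n, xs n ∈ A n) →
      Tendsto xs atTop (𝓝 x) →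
      Tendsto (fun n => f n (xs n)) atTop (𝓝 (g x))) :
    ∃ M : ℝ, ∀ n, ∀ x ∈ A n, |f n x| ≤ M := by
  by_contra hcon
  push_neg at hcon
  -- per-n bounds
  choose C hC using fun n => (hAc n).exists_bound_of_continuousOn (hfc n)
  have hfreq : ∀ j : ℕ, ∃ᶠ m in atTop, ∃ x ∈ A m, (j : ℝ) < |f m x| := by
    intro j
    rw [frequently_atTop]
    intro K
    obtain ⟨n, x, hxA, hx⟩ := hcon ((j : ℝ) + ∑ m ∈ Finset.range K, |C m|)
    have hsum : (0:ℝ) ≤ ∑ m ∈ Finset.range K, |C m| :=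
      Finset.sum_nonneg fun m _ => abs_nonneg _
    refine ⟨n, ?_, x, hxA, lt_of_le_of_lt (by linarith) hx⟩
    by_contra hnK
    push_neg at hnK
    have h1 : |f n x| ≤ C n := by simpa using hC n x hxA
    have h2 : C n ≤ ∑ m ∈ Finset.range K, |C m| :=
      le_trans (le_abs_self _) (Finset.single_le_sum (f := fun m => |C m|)
        (fun m _ => abs_nonneg _) (Finset.mem_range.2 hnK))
    have : (0:ℝ) ≤ (j:ℝ) := Nat.cast_nonneg j
    linarith
  obtain ⟨φ, hφ, hP⟩ := Filter.extraction_forall_of_frequently hfreq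
  choose x hxA hxb using hP
  obtain ⟨p, -, ψ, hψ, hxψ⟩ := isCompact_univ.tendsto_subseq (fun k => Set.mem_univ (x k))
  have he : StrictMono (φ ∘ ψ) := hφ.comp hψ
  obtain ⟨hpA, hlim⟩ := workhorse A Ainf hAc hAne hAinfc hAinfne hH f g hconv he
    (fun k => hxA (ψ k)) hxψ
  -- contradiction: |f (φ (ψ k)) (x (ψ k))| > ψ k ≥ k but sequence converges
  have hev : ∀ᶠ k in atTop, |f (φ (ψ k)) (x (ψ k))| < |g p| + 1 :=
    hlim.abs.eventually_lt_const (by linarith [abs_nonneg (g p)])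
  have hge : ∀ k : ℕ, (k : ℝ) < |f (φ (ψ k)) (x (ψ k))| := fun k =>
    lt_of_le_of_lt (by exact_mod_cast hψ.le_apply) (hxb (ψ k))
  obtain ⟨k, hk1, hk2⟩ := (hev.and (eventually_atTop.2
    ⟨⌈|g p| + 1⌉₊, fun k hk => hk⟩)).exists
  have : (|g p| + 1 : ℝ) ≤ (k : ℝ) := by
    calc (|g p| + 1 : ℝ) ≤ (⌈|g p| + 1⌉₊ : ℝ) := Nat.le_ceil _
    _ ≤ (k : ℝ) := by exact_mod_cast hk2
  linarith [hge k]

lemma equicont (A : ℕ → Set B) (Ainf : Set B)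
    (hAc : ∀ n, IsCompact (A n)) (hAne : ∀ n, (A n).Nonempty)
    (hAinfc : IsCompact Ainf) (hAinfne : Ainf.Nonempty)
    (hH : Tendsto (fun n => Metric.hausdorffDist (A n) Ainf) atTop (𝓝 0))
    (f : ℕ → B → ℝ) (hfc : ∀ n, ContinuousOn (f n) (A n))
    (g : B → ℝ)
    (hconv : ∀ x ∈ Ainf, ∀ xs : ℕ → B, (∀ n, xs n ∈ A n) →
      Tendsto xs atTop (𝓝 x) →
      Tendsto (fun n => f n (xs n)) atTop (𝓝 (g x))) :
    ∀ ε > (0:ℝ), ∃ δ > (0:ℝ), ∀ n, ∀ x ∈ A n, ∀ y ∈ A n,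
      dist x y < δ → |f n x - f n y| < ε := by
  by_contra hcon
  push_neg at hcon
  obtain ⟨ε, hε, hcon⟩ := hcon
  -- uniform continuity moduli for each n
  have hUC : ∀ n, ∃ δ > (0:ℝ), ∀ x ∈ A n, ∀ y ∈ A n, dist x y < δ → |f n x - f n y| < ε := by
    intro n
    have := Metric.uniformContinuousOn_iff.1
      ((hAc n).uniformContinuousOn_of_continuous (hfc n)) ε hε
    obtain ⟨δ, hδ, h⟩ := this
    exact ⟨δ, hδ, fun x hx y hy hd => by rw [← Real.dist_eq]; exact h x hx y hy hd⟩
  choose δs hδspos hδs using hUC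
  have hfreq : ∀ j : ℕ, ∃ᶠ m in atTop, ∃ x ∈ A m, ∃ y ∈ A m,
      dist x y < 1 / (j + 1) ∧ ε ≤ |f m x - f m y| := by
    intro j
    rw [frequently_atTop]
    intro K
    set d : ℝ := min (1 / ((j : ℝ) + 1)) ((Finset.range (K + 1)).inf' (by simp) δs) with hd
    have hdpos : 0 < d := by
      apply lt_min
      · positivity
      · rw [Finset.lt_inf'_iff]
        exact fun m _ => hδspos m
    obtain ⟨n, x, hxA, y, hyA, hdist, hsep⟩ := hcon d hdpos
    have hnK : K < n := by
      by_contra hnK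
      push_neg at hnK
      have h1 : d ≤ δs n := min_le_of_right_le
        (Finset.inf'_le _ (Finset.mem_range.2 (Nat.lt_succ_of_le hnK)))
      exact absurd (hδs n x hxA y hyA (lt_of_lt_of_le hdist h1)) (not_lt.2 hsep)
    exact ⟨n, le_of_lt hnK, x, hxA, y, hyA,
      lt_of_lt_of_le hdist (min_le_left _ _), hsep⟩
  obtain ⟨φ, hφ, hP⟩ := Filter.extraction_forall_of_frequently hfreq
  choose x hxA y hyA hdist hsep using hP
  obtain ⟨p, -, ψ, hψ, hxψ⟩ := isCompact_univ.tendsto_subseq (fun k => Set.mem_univ (x k))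
  have he : StrictMono (φ ∘ ψ) := hφ.comp hψ
  -- y ∘ ψ also tends to p
  have hd0 : Tendsto (fun j => dist (x (ψ j)) (y (ψ j))) atTop (𝓝 0) := by
    apply squeeze_zero (fun j => dist_nonneg) (g := fun j : ℕ => 1 / ((j : ℝ) + 1))
    · intro j
      refine le_of_lt (lt_of_lt_of_le (hdist (ψ j)) ?_)
      apply one_div_le_one_div_of_le
      · positivity
      · have : (j : ℝ) ≤ (ψ j : ℝ) := by exact_mod_cast hψ.le_apply
        linarith
    · exact tendsto_one_div_add_atTop_nhds_zero_nat
  have hyψ : Tendsto (y ∘ ψ) atTop (𝓝 p) := hxψ.congr_dist hd0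
  obtain ⟨hpA, hlimx⟩ := workhorse A Ainf hAc hAne hAinfc hAinfne hH f g hconv he
    (fun k => hxA (ψ k)) hxψ
  obtain ⟨-, hlimy⟩ := workhorse A Ainf hAc hAne hAinfc hAinfne hH f g hconv he
    (fun k => hyA (ψ k)) hyψ
  have hsub : Tendsto (fun j => f (φ (ψ j)) (x (ψ j)) - f (φ (ψ j)) (y (ψ j)))
      atTop (𝓝 0) := by simpa using hlimx.sub hlimy
  have habs : Tendsto (fun j => |f (φ (ψ j)) (x (ψ j)) - f (φ (ψ j)) (y (ψ j))|)
      atTop (𝓝 0) := by simpa using hsub.abs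
  have := (habs.eventually_lt_const hε).exists
  obtain ⟨j, hj⟩ := this
  simpa using absurd (hsep (ψ j)) (not_le.2 (by simpa using hj))

lemma g_cont (A : ℕ → Set B) (Ainf : Set B)
    (hAc : ∀ n, IsCompact (A n)) (hAne : ∀ n, (A n).Nonempty)
    (hAinfne : Ainf.Nonempty)
    (hH : Tendsto (fun n => Metric.hausdorffDist (A n) Ainf) atTop (𝓝 0))
    (f : ℕ → B → ℝ) (g : B → ℝ)
    (hconv : ∀ x ∈ Ainf, ∀ xs : ℕ → B, (∀ n, xs n ∈ A n) →
      Tendsto xs atTop (𝓝 x) →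
      Tendsto (fun n => f n (xs n)) atTop (𝓝 (g x)))
    (hec : ∀ ε > (0:ℝ), ∃ δ > (0:ℝ), ∀ n, ∀ x ∈ A n, ∀ y ∈ A n,
      dist x y < δ → |f n x - f n y| < ε) :
    ContinuousOn g Ainf := by
  rw [Metric.continuousOn_iff]
  intro b hb ε hε
  obtain ⟨δ, hδ, hδε⟩ := hec (ε / 2) (by linarith)
  refine ⟨δ / 2, by linarith, fun a ha hab => ?_⟩
  -- nearest point sequences
  choose xa hxaA hxad using fun n => near_pt A Ainf hAc hAne hAinfne ha n
  choose xb hxbA hxbd using fun n => near_pt A Ainf hAc hAne hAinfne hb n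
  have hta : Tendsto xa atTop (𝓝 a) := by
    apply tendsto_iff_dist_tendsto_zero.2
    apply squeeze_zero (fun n => dist_nonneg) (fun n => by rw [dist_comm]; exact hxad n) hH
  have htb : Tendsto xb atTop (𝓝 b) := by
    apply tendsto_iff_dist_tendsto_zero.2
    apply squeeze_zero (fun n => dist_nonneg) (fun n => by rw [dist_comm]; exact hxbd n) hH
  have hfa := hconv a ha xa hxaA hta
  have hfb := hconv b hb xb hxbA htb
  have hdist : Tendsto (fun n => dist (xa n) (xb n)) atTop (𝓝 (dist a b)) :=
    hta.dist htb
  have hev : ∀ᶠ n in atTop, dist (xa n) (xb n) < δ :=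
    hdist.eventually_lt_const (by linarith)
  have hev2 : ∀ᶠ n in atTop, |f n (xa n) - f n (xb n)| < ε / 2 :=
    hev.mono fun n hn => hδε n (xa n) (hxaA n) (xb n) (hxbA n) hn
  have hlim : Tendsto (fun n => |f n (xa n) - f n (xb n)|) atTop (𝓝 |g a - g b|) :=
    (hfa.sub hfb).abs
  have : |g a - g b| ≤ ε / 2 :=
    le_of_tendsto hlim (hev2.mono fun n hn => le_of_lt hn)
  rw [Real.dist_eq]
  linarith


end Helpers

/-- Under setting (C1), if `f n ∈ C(A n)` and `f_n ⇀ g` for some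
`g : A → ℝ`, then the family `{f n}` is uniformly bounded and equicontinuous,
and `g` is continuous on `A`. -/
theorem stmt1 {B : Type*} [MetricSpace B] [CompactSpace B]
    (A : ℕ → Set B) (Ainf : Set B)
    (hAc : ∀ n, IsCompact (A n)) (hAne : ∀ n, (A n).Nonempty)
    (hAinfc : IsCompact Ainf) (hAinfne : Ainf.Nonempty)
    (hH : Tendsto (fun n => Metric.hausdorffDist (A n) Ainf) atTop (𝓝 0))
    (f : ℕ → B → ℝ) (hfc : ∀ n, ContinuousOn (f n) (A n))
    (g : B → ℝ)
    (hconv : ∀ x ∈ Ainf, ∀ xs : ℕ → B, (∀ n, xs n ∈ A n) →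
      Tendsto xs atTop (𝓝 x) →
      Tendsto (fun n => f n (xs n)) atTop (𝓝 (g x))) :
    (∃ M : ℝ, ∀ n, ∀ x ∈ A n, |f n x| ≤ M) ∧
    (∀ ε > (0:ℝ), ∃ δ > (0:ℝ), ∀ n, ∀ x ∈ A n, ∀ y ∈ A n,
      dist x y < δ → |f n x - f n y| < ε) ∧
    ContinuousOn g Ainf := by
  have hec := equicont A Ainf hAc hAne hAinfc hAinfne hH f hfc g hconv
  exact ⟨unif_bdd A Ainf hAc hAne hAinfc hAinfne hH f hfc g hconv, hec,
    g_cont A Ainf hAc hAne hAinfne hH f g hconv hec⟩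
end

section
/- Assume setting (C1), let f_n ∈ C(A_n) for each n ≥ 1 and let f ∈ C(A). The following are equivalent: (a) f_n ⇀ f; (b) the function f̃ on the set Ã = ({0} × A) ∪ ⋃_{n≥1} ({1/n} × A_n) ⊆ [0,1] × B, defined by f̃(1/n, x) = f_n(x) for x ∈ A_n and f̃(0, x) = f(x) for x ∈ A, is continuous on Ã with the topology induced from [0,1] × B; (c) there exist functions g_n, g ∈ C(B) with g_n|_{A_n} = f_n for all n, g|_A = f, and g_n → g uniformly on B. -/
open Filter Topology Set Function Metric

/-!
The heart is (a) ⇒ (c). Fix a continuous extension `G₀` of `g`. Continuous convergence forces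
`sup_{A n} |f n - G₀| → 0`: otherwise, by compactness of `B`, a subsequence of bad points
converges to a point `x`, which lies in `Ainf` by Hausdorff convergence; filling in the missing
indices with points of `A n` approaching `x` produces a sequence along which (a) fails. Tietze's
theorem then extends `f n - G₀` to `B` keeping the same sup bound.

(c) ⇒ (b) because the levels `1 / (n + 1)` are isolated, while at level `0` uniform convergence
gives joint continuity; (b) ⇒ (a) and (c) ⇒ (a) come from evaluating along
`(1 / (n + 1), xs n) → (0, x)`.
-/

theorem Function.Injective.tendsto_extend {α β γ : Type*} {φ : α → β} (hφ : Injective φ)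
    {y : α → γ} {z : β → γ} {l : Filter γ} (hy : Tendsto y cofinite l)
    (hz : Tendsto z cofinite l) : Tendsto (extend φ y z) cofinite l := by
  intro U hU
  have hsub : (extend φ y z ⁻¹' U)ᶜ ⊆ φ '' (y ⁻¹' U)ᶜ ∪ (z ⁻¹' U)ᶜ := by
    intro b hb
    by_cases h : ∃ a, φ a = b
    · obtain ⟨a, rfl⟩ := h
      exact Or.inl ⟨a, by simpa [hφ.extend_apply] using hb, rfl⟩
    · exact Or.inr (by simpa [extend_apply' _ _ _ h] using hb)
  exact mem_cofinite.2 (((hy hU).image φ).union (hz hU) |>.subset hsub)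

section Tietze

variable {X : Type*} [TopologicalSpace X] [NormalSpace X] {s : Set X}

theorem exists_continuous_eqOn_of_isClosed (hs : IsClosed s) {f : X → ℝ} (hf : ContinuousOn f s) :
    ∃ F : X → ℝ, Continuous F ∧ EqOn F f s := by
  obtain ⟨F, hF⟩ := ContinuousMap.exists_restrict_eq hs ⟨s.domRestrict f, hf.domRestrict⟩
  exact ⟨F, F.continuous, fun x hx => congr($hF ⟨x, hx⟩)⟩

theorem exists_continuous_eqOn_abs_le_of_isClosed (hs : IsClosed s) {f : X → ℝ}
    (hf : ContinuousOn f s) {c : ℝ} (hfc : ∀ x ∈ s, |f x| ≤ c) (hc : 0 ≤ c) :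
    ∃ F : X → ℝ, Continuous F ∧ EqOn F f s ∧ ∀ x, |F x| ≤ c := by
  obtain ⟨F, hFc, hF⟩ := ContinuousMap.exists_restrict_eq_forall_mem_of_closed
    ⟨s.domRestrict f, hf.domRestrict⟩ (t := Icc (-c) c) (fun x => abs_le.1 (hfc x x.2))
    (nonempty_Icc.2 (by linarith)) hs
  exact ⟨F, F.continuous, fun x hx => congr($hF ⟨x, hx⟩), fun x => abs_le.2 (hFc x)⟩

end Tietze

theorem exists_tendsto_of_tendsto_hausdorffDist {α : Type*} [PseudoMetricSpace α]
    {s t : ℕ → Set α} (hfin : ∀ n, hausdorffEDist (s n) (t n) ≠ ⊤)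
    (hst : Tendsto (fun n => hausdorffDist (s n) (t n)) atTop (𝓝 0)) {x : ℕ → α} {a : α}
    (hxs : ∀ n, x n ∈ s n) (hx : Tendsto x atTop (𝓝 a)) :
    ∃ y : ℕ → α, (∀ n, y n ∈ t n) ∧ Tendsto y atTop (𝓝 a) := by
  have : ∀ n, ∃ z ∈ t n, dist (x n) z < hausdorffDist (s n) (t n) + 1 / (n + 1) := fun n =>
    exists_dist_lt_of_hausdorffDist_lt (hxs n) (lt_add_of_pos_right _ Nat.one_div_pos_of_nat)
      (hfin n)
  choose y hyt hy using this
  refine ⟨y, hyt, tendsto_iff_dist_tendsto_zero.2 <| squeeze_zero (fun _ => dist_nonneg)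
    (g := fun n => hausdorffDist (s n) (t n) + 1 / (n + 1) + dist (x n) a) ?_ ?_⟩
  · exact fun n => calc
      dist (y n) a ≤ dist (x n) (y n) + dist (x n) a := dist_triangle_left _ _ _
      _ ≤ hausdorffDist (s n) (t n) + 1 / (n + 1) + dist (x n) a := by gcongr; exact (hy n).le
  · simpa using (hst.add tendsto_one_div_add_atTop_nhds_zero_nat).add
      (tendsto_iff_dist_tendsto_zero.1 hx)

section Convergence

variable {B γ : Type*} [TopologicalSpace B] [TopologicalSpace γ]

/-- The paper's `f n ⇀ g`. -/
def ContinuouslyConvergesTo (A : ℕ → Set B) (Ainf : Set B) (f : ℕ → B → γ) (g : B → γ) : Prop :=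
  ∀ x ∈ Ainf, ∀ xs : ℕ → B, (∀ n, xs n ∈ A n) → Tendsto xs atTop (𝓝 x) →
    Tendsto (fun n => f n (xs n)) atTop (𝓝 (g x))

variable {A : ℕ → Set B} {Ainf : Set B} {f : ℕ → B → γ} {g : B → γ}

/-- The subsequence `y` is completed to a full sequence by `xs`. -/
theorem ContinuouslyConvergesTo.tendsto_comp_injective (hfg : ContinuouslyConvergesTo A Ainf f g)
    {x : B} (hx : x ∈ Ainf) {xs : ℕ → B} (hxsA : ∀ n, xs n ∈ A n) (hxs : Tendsto xs atTop (𝓝 x))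
    {φ : ℕ → ℕ} (hφ : Injective φ) {y : ℕ → B} (hyA : ∀ k, y k ∈ A (φ k))
    (hy : Tendsto y atTop (𝓝 x)) : Tendsto (fun k => f (φ k) (y k)) atTop (𝓝 (g x)) := by
  have hzA : ∀ n, extend φ y xs n ∈ A n := by
    intro n
    by_cases h : ∃ k, φ k = n
    · obtain ⟨k, rfl⟩ := h
      simpa [hφ.extend_apply] using hyA k
    · simpa [extend_apply' _ _ _ h] using hxsA n
  rw [← Nat.cofinite_eq_atTop] at hxs hy
  have hz := hφ.tendsto_extend hy hxs
  rw [Nat.cofinite_eq_atTop] at hz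
  refine ((hfg x hx _ hzA hz).comp hφ.nat_tendsto_atTop).congr fun k => ?_
  simp [hφ.extend_apply]

end Convergence

section Hausdorff

variable {B : Type*} [MetricSpace B] [CompactSpace B] {A : ℕ → Set B} {Ainf : Set B}

theorem ContinuouslyConvergesTo.tendsto_sub_of_eqOn {E : Type*} [TopologicalSpace E] [AddGroup E]
    [IsTopologicalAddGroup E] {f : ℕ → B → E} {g : B → E} (hAinf : IsClosed Ainf)
    (hfin : ∀ n, hausdorffEDist (A n) Ainf ≠ ⊤)
    (hH : Tendsto (fun n => hausdorffDist (A n) Ainf) atTop (𝓝 0))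
    (hfg : ContinuouslyConvergesTo A Ainf f g) {G : B → E} (hG : Continuous G)
    (hGg : EqOn G g Ainf) {y : ℕ → B} (hyA : ∀ n, y n ∈ A n) :
    Tendsto (fun n => f n (y n) - G (y n)) atTop (𝓝 0) := by
  by_contra hne
  obtain ⟨U, hU, hfreq⟩ := not_tendsto_iff_exists_frequently_notMem.1 hne
  obtain ⟨φ, hφ, hφU⟩ := extraction_of_frequently_atTop hfreq
  obtain ⟨x, -, ψ, hψ, hx⟩ := isCompact_univ.tendsto_subseq fun k => mem_univ (y (φ k))
  have hθ : StrictMono (φ ∘ ψ) := hφ.comp hψ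
  obtain ⟨w, hwA, hw⟩ := exists_tendsto_of_tendsto_hausdorffDist (fun k => hfin (φ (ψ k)))
    (hH.comp hθ.tendsto_atTop) (fun k => hyA (φ (ψ k))) hx
  have hxA : x ∈ Ainf := hAinf.mem_of_tendsto hw (.of_forall hwA)
  obtain ⟨xs, hxsA, hxs⟩ := exists_tendsto_of_tendsto_hausdorffDist (s := fun _ => Ainf) (t := A)
    (fun n => hausdorffEDist_comm (s := A n) ▸ hfin n)
    (by simpa only [hausdorffDist_comm] using hH) (fun _ => hxA) tendsto_const_nhds
  have hfx := hfg.tendsto_comp_injective hxA hxsA hxs hθ.injective (fun k => hyA _) hx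
  have hGx : Tendsto (fun k => G (y (φ (ψ k)))) atTop (𝓝 (g x)) := hGg hxA ▸ (hG.tendsto x).comp hx
  obtain ⟨k, hk⟩ := ((sub_self (g x) ▸ hfx.sub hGx).eventually hU).exists
  exact hφU (ψ k) hk

theorem ContinuouslyConvergesTo.exists_tendstoUniformly {f : ℕ → B → ℝ} {g : B → ℝ}
    (hAc : ∀ n, IsCompact (A n)) (hAne : ∀ n, (A n).Nonempty) (hAinf : IsClosed Ainf)
    (hfin : ∀ n, hausdorffEDist (A n) Ainf ≠ ⊤)
    (hH : Tendsto (fun n => hausdorffDist (A n) Ainf) atTop (𝓝 0))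
    (hfc : ∀ n, ContinuousOn (f n) (A n)) (hgc : ContinuousOn g Ainf)
    (hfg : ContinuouslyConvergesTo A Ainf f g) :
    ∃ G : ℕ → B → ℝ, ∃ Ginf : B → ℝ,
      (∀ n, Continuous (G n)) ∧ Continuous Ginf ∧
      (∀ n, ∀ x ∈ A n, G n x = f n x) ∧ (∀ x ∈ Ainf, Ginf x = g x) ∧
      TendstoUniformly G Ginf atTop := by
  obtain ⟨G₀, hG₀, hG₀g⟩ := exists_continuous_eqOn_of_isClosed hAinf hgc
  have hdc : ∀ n, ContinuousOn (f n - G₀) (A n) := fun n => (hfc n).sub hG₀.continuousOn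
  -- `c n` is the sup-distance between `f n` and `G₀` on `A n`, attained at `y n`
  choose y hyA hymax using fun n => (hAc n).exists_isMaxOn (hAne n) (hdc n).abs
  set c : ℕ → ℝ := fun n => |f n (y n) - G₀ (y n)|
  have hc : Tendsto c atTop (𝓝 0) := by
    simpa using (hfg.tendsto_sub_of_eqOn hAinf hfin hH hG₀ hG₀g hyA).abs
  choose D hD hDf hDc using fun n => exists_continuous_eqOn_abs_le_of_isClosed (hAc n).isClosed
    (hdc n) (fun x hx => isMaxOn_iff.1 (hymax n) x hx) (abs_nonneg _)
  refine ⟨fun n => G₀ + D n, G₀, fun n => hG₀.add (hD n), hG₀, fun n x hx => ?_, hG₀g, ?_⟩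
  · simp [hDf n hx]
  · rw [Metric.tendstoUniformly_iff]
    intro ε hε
    filter_upwards [hc.eventually (gt_mem_nhds hε)] with n hn x
    simpa [Real.dist_eq] using (hDc n x).trans_lt hn

end Hausdorff

noncomputable def sliceIndex (t : ℝ) : ℕ := ⌊t⁻¹⌋₊ - 1

theorem sliceIndex_one_div (n : ℕ) : sliceIndex (1 / (n + 1)) = n := by
  rw [sliceIndex, one_div, inv_inv, ← Nat.cast_add_one, Nat.floor_natCast, Nat.add_sub_cancel]

theorem tendsto_sliceIndex : Tendsto sliceIndex (𝓝[>] 0) atTop :=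
  (tendsto_sub_atTop_nat 1).comp (tendsto_nat_floor_atTop.comp tendsto_inv_nhdsGT_zero)

theorem eq_of_one_div_mem_Ioo {m n : ℕ}
    (h : 1 / (m + 1 : ℝ) ∈ Ioo (1 / (n + 3 / 2 : ℝ)) (1 / (n + 1 / 2))) : m = n := by
  rw [mem_Ioo, one_div_lt_one_div (by positivity) (by positivity),
    one_div_lt_one_div (by positivity) (by positivity)] at h
  have hmn : (m : ℝ) < n + 1 := by linarith
  have hnm : (n : ℝ) < m + 1 := by linarith
  norm_cast at hmn hnm
  omega

section Stacked

variable {B γ : Type*}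

/-- The set `Ã` of the paper. -/
def stackedSet (A : ℕ → Set B) (Ainf : Set B) : Set (ℝ × B) :=
  ({(0 : ℝ)} ×ˢ Ainf) ∪ ⋃ n : ℕ, {(1 / (n + 1 : ℝ))} ×ˢ A n

theorem stackedSet_inter_preimage_Ioo_subset (A : ℕ → Set B) (Ainf : Set B) (n : ℕ) :
    stackedSet A Ainf ∩ Prod.fst ⁻¹' Ioo (1 / (n + 3 / 2 : ℝ)) (1 / (n + 1 / 2)) ⊆
      {(1 / (n + 1 : ℝ))} ×ˢ A n := by
  rintro ⟨t, x⟩ ⟨⟨rfl, -⟩ | hq, ht⟩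
  · exact absurd ht.1 (by simp only [not_lt]; positivity)
  · obtain ⟨m, rfl, hx⟩ := mem_iUnion.1 hq
    obtain rfl := eq_of_one_div_mem_Ioo ht
    exact ⟨rfl, hx⟩

/-- The function `f̃` of the paper. -/
noncomputable def stackedFun (f : ℕ → B → γ) (g : B → γ) (q : ℝ × B) : γ :=
  if q.1 = 0 then g q.2 else f (sliceIndex q.1) q.2

theorem stackedFun_zero (f : ℕ → B → γ) (g : B → γ) (x : B) : stackedFun f g (0, x) = g x :=
  if_pos rfl

theorem stackedFun_one_div (f : ℕ → B → γ) (g : B → γ) (n : ℕ) (x : B) :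
    stackedFun f g (1 / (n + 1), x) = f n x := by
  rw [stackedFun, if_neg (by positivity), sliceIndex_one_div]

variable [TopologicalSpace B] {A : ℕ → Set B} {Ainf : Set B}

theorem ContinuousOn.continuouslyConvergesTo_of_stackedSet [TopologicalSpace γ]
    {f : ℕ → B → γ} {g : B → γ} {F : ℝ × B → γ} (hF : ContinuousOn F (stackedSet A Ainf))
    (hF0 : ∀ x ∈ Ainf, F (0, x) = g x) (hFn : ∀ n, ∀ x ∈ A n, F (1 / (n + 1), x) = f n x) :
    ContinuouslyConvergesTo A Ainf f g := by
  intro x hx xs hxsA hxs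
  have hseq : Tendsto (fun n : ℕ => (1 / (n + 1 : ℝ), xs n)) atTop
      (𝓝[stackedSet A Ainf] (0, x)) :=
    tendsto_nhdsWithin_iff.2 ⟨tendsto_one_div_add_atTop_nhds_zero_nat.prodMk_nhds hxs,
      .of_forall fun n => Or.inr (mem_iUnion.2 ⟨n, rfl, hxsA n⟩)⟩
  have hFx := (hF (0, x) (Or.inl ⟨rfl, hx⟩)).tendsto.comp hseq
  rw [hF0 x hx] at hFx
  exact hFx.congr fun n => hFn n _ (hxsA n)

variable [UniformSpace γ] {G : ℕ → B → γ} {Ginf : B → γ}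

theorem TendstoUniformly.continuouslyConvergesTo {f : ℕ → B → γ} {g : B → γ}
    (hGu : TendstoUniformly G Ginf atTop) (hGinf : Continuous Ginf)
    (hGf : ∀ n, ∀ x ∈ A n, G n x = f n x) (hGg : ∀ x ∈ Ainf, Ginf x = g x) :
    ContinuouslyConvergesTo A Ainf f g := by
  intro x hx xs hxsA hxs
  rw [← hGg x hx]
  exact (hGu.tendsto_comp hGinf.continuousAt hxs).congr fun n => hGf n _ (hxsA n)

theorem TendstoUniformly.tendsto_comp_sliceIndex (hGu : TendstoUniformly G Ginf atTop) {x : B}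
    (hGinf : ContinuousAt Ginf x) :
    Tendsto (fun q : ℝ × B => G (sliceIndex q.1) q.2) (𝓝[Prod.fst ⁻¹' Ioi 0] (0, x))
      (𝓝 (Ginf x)) := by
  have hidx : Tendsto (fun q : ℝ × B => sliceIndex q.1) (𝓝[Prod.fst ⁻¹' Ioi 0] (0, x)) atTop :=
    tendsto_sliceIndex.comp (continuous_fst.continuousWithinAt.tendsto_nhdsWithin fun _ h => h)
  exact (hGinf.tendsto.comp continuous_snd.continuousWithinAt.tendsto).congr_uniformity
    ((tendstoUniformly_iff_tendsto.1 hGu).comp (hidx.prodMk tendsto_top))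

theorem TendstoUniformly.continuousOn_stackedSet (hGu : TendstoUniformly G Ginf atTop)
    (hG : ∀ n, Continuous (G n)) (hGinf : Continuous Ginf) {F : ℝ × B → γ}
    (hF0 : ∀ x ∈ Ainf, F (0, x) = Ginf x) (hFn : ∀ n, ∀ x ∈ A n, F (1 / (n + 1), x) = G n x) :
    ContinuousOn F (stackedSet A Ainf) := by
  rintro ⟨t, x⟩ (⟨rfl, hx⟩ | hp)
  · refine ContinuousWithinAt.union ?_ ?_
    · refine (hGinf.comp continuous_snd).continuousWithinAt.congr ?_ (hF0 x hx)
      rintro ⟨_, y⟩ ⟨rfl, hy⟩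
      exact hF0 y hy
    · have hpos : (⋃ n : ℕ, {(1 / (n + 1 : ℝ))} ×ˢ A n) ⊆ Prod.fst ⁻¹' Ioi 0 := by
        simp only [iUnion_subset_iff]
        rintro n ⟨_, y⟩ ⟨rfl, -⟩
        exact Nat.one_div_pos_of_nat (α := ℝ)
      rw [ContinuousWithinAt, hF0 x hx]
      refine ((hGu.tendsto_comp_sliceIndex hGinf.continuousAt).mono_left
        (nhdsWithin_mono _ hpos)).congr' (eventually_nhdsWithin_of_forall ?_)
      rintro ⟨_, y⟩ hq
      obtain ⟨n, rfl, hy⟩ := mem_iUnion.1 hq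
      rw [hFn n y hy, sliceIndex_one_div]
  · obtain ⟨n, rfl, hx⟩ := mem_iUnion.1 hp
    have hslab :
        Prod.fst ⁻¹' Ioo (1 / (n + 3 / 2 : ℝ)) (1 / (n + 1 / 2)) ∈ 𝓝 (1 / (n + 1 : ℝ), x) :=
      continuous_fst.continuousAt.preimage_mem_nhds <| Ioo_mem_nhds
        (one_div_lt_one_div_of_lt (by positivity) (by linarith))
        (one_div_lt_one_div_of_lt (by positivity) (by linarith))
    rw [← continuousWithinAt_inter hslab]
    refine ((hG n).comp continuous_snd).continuousWithinAt.congr ?_ (hFn n x hx)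
    rintro ⟨_, y⟩ hq
    obtain ⟨rfl, hy⟩ := stackedSet_inter_preimage_Ioo_subset A Ainf n hq
    exact hFn n y hy

end Stacked

/-- Under setting (C1), for `f n ∈ C(A n)` and `g ∈ C(A)`,
the following are equivalent:
(a) `f_n ⇀ g`;
(b) the glued function on `Ã = ({0} × A) ∪ ⋃ₙ ({1/(n+1)} × A n) ⊆ ℝ × B` is continuous;
(c) there are continuous extensions `G n, Ginf ∈ C(B)` of `f n, g` with
`G n → Ginf` uniformly on `B`. -/
theorem stmt2 {B : Type*} [MetricSpace B] [CompactSpace B]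
    (A : ℕ → Set B) (Ainf : Set B)
    (hAc : ∀ n, IsCompact (A n)) (hAne : ∀ n, (A n).Nonempty)
    (hAinfc : IsCompact Ainf) (hAinfne : Ainf.Nonempty)
    (hH : Tendsto (fun n => Metric.hausdorffDist (A n) Ainf) atTop (𝓝 0))
    (f : ℕ → B → ℝ) (hfc : ∀ n, ContinuousOn (f n) (A n))
    (g : B → ℝ) (hgc : ContinuousOn g Ainf) :
    ((∀ x ∈ Ainf, ∀ xs : ℕ → B, (∀ n, xs n ∈ A n) →
        Tendsto xs atTop (𝓝 x) →
        Tendsto (fun n => f n (xs n)) atTop (𝓝 (g x))) ↔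
      (∀ F : ℝ × B → ℝ,
        (∀ x ∈ Ainf, F (0, x) = g x) →
        (∀ n, ∀ x ∈ A n, F (1 / (n + 1 : ℝ), x) = f n x) →
        ContinuousOn F (({(0:ℝ)} ×ˢ Ainf) ∪ ⋃ n : ℕ, {(1 / (n + 1 : ℝ))} ×ˢ A n))) ∧
    ((∀ x ∈ Ainf, ∀ xs : ℕ → B, (∀ n, xs n ∈ A n) →
        Tendsto xs atTop (𝓝 x) →
        Tendsto (fun n => f n (xs n)) atTop (𝓝 (g x))) ↔
      (∃ G : ℕ → B → ℝ, ∃ Ginf : B → ℝ,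
        (∀ n, Continuous (G n)) ∧ Continuous Ginf ∧
        (∀ n, ∀ x ∈ A n, G n x = f n x) ∧ (∀ x ∈ Ainf, Ginf x = g x) ∧
        TendstoUniformly G Ginf atTop)) := by
  have hfin : ∀ n, hausdorffEDist (A n) Ainf ≠ ⊤ := fun n =>
    hausdorffEDist_ne_top_of_nonempty_of_bounded (hAne n) hAinfne (hAc n).isBounded
      hAinfc.isBounded
  have hac (hfg : ContinuouslyConvergesTo A Ainf f g) :=
    hfg.exists_tendstoUniformly hAc hAne hAinfc.isClosed hfin hH hfc hgc
  refine ⟨⟨fun hfg F hF0 hFn => ?_, fun hb => ?_⟩, ⟨hac, ?_⟩⟩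
  · obtain ⟨G, Ginf, hG, hGinf, hGf, hGg, hGu⟩ := hac hfg
    exact hGu.continuousOn_stackedSet hG hGinf (fun x hx => (hF0 x hx).trans (hGg x hx).symm)
      fun n x hx => (hFn n x hx).trans (hGf n x hx).symm
  · have h0 : ∀ x ∈ Ainf, stackedFun f g (0, x) = g x := fun x _ => stackedFun_zero f g x
    have hn : ∀ n, ∀ x ∈ A n, stackedFun f g (1 / (n + 1 : ℝ), x) = f n x :=
      fun n x _ => stackedFun_one_div f g n x
    exact (hb _ h0 hn).continuouslyConvergesTo_of_stackedSet h0 hn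
  · rintro ⟨G, Ginf, -, hGinf, hGf, hGg, hGu⟩
    exact hGu.continuouslyConvergesTo hGinf hGf hGg
end

section
/- Assume settings (C1) and (C2). Let f_n ∈ C(A_n) for each n ≥ 1 and f ∈ C(A). If f_n ⇀ f, then the measures f_n·μ_n converge weakly to f·μ; that is, for every g ∈ C(B), ∫_{A_n} g·f_n dμ_n → ∫_A g·f dμ as n → ∞. -/
open Filter Topology MeasureTheory Metric

/-- Under settings (C1) and (C2), if `f n ∈ C(A n)`, `g ∈ C(A)`
and `f_n ⇀ g`, then `f_n · μ_n ⇒ g · μ` weakly: for every continuous `h : B → ℝ`,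
`∫_{A n} h · f n dμ n → ∫_A h · g dμ`. -/
theorem stmt3 {B : Type*} [MetricSpace B] [CompactSpace B]
    [MeasurableSpace B] [BorelSpace B]
    (A : ℕ → Set B) (Ainf : Set B)
    (hAc : ∀ n, IsCompact (A n)) (hAne : ∀ n, (A n).Nonempty)
    (hAinfc : IsCompact Ainf) (hAinfne : Ainf.Nonempty)
    (hH : Tendsto (fun n => Metric.hausdorffDist (A n) Ainf) atTop (𝓝 0))
    (μ : ℕ → Measure B) (μinf : Measure B)
    (hprob : ∀ n, IsProbabilityMeasure (μ n)) (hprobinf : IsProbabilityMeasure μinf)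
    (hsupp : ∀ n, μ n (A n)ᶜ = 0 ∧
      ∀ x ∈ A n, ∀ U : Set B, IsOpen U → x ∈ U → 0 < μ n U)
    (hsuppinf : μinf Ainfᶜ = 0 ∧
      ∀ x ∈ Ainf, ∀ U : Set B, IsOpen U → x ∈ U → 0 < μinf U)
    (hweak : ∀ h : B → ℝ, Continuous h →
      Tendsto (fun n => ∫ x, h x ∂(μ n)) atTop (𝓝 (∫ x, h x ∂μinf)))
    (f : ℕ → B → ℝ) (hfc : ∀ n, ContinuousOn (f n) (A n))
    (g : B → ℝ) (hgc : ContinuousOn g Ainf)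
    (hconv : ∀ x ∈ Ainf, ∀ xs : ℕ → B, (∀ n, xs n ∈ A n) →
      Tendsto xs atTop (𝓝 x) →
      Tendsto (fun n => f n (xs n)) atTop (𝓝 (g x))) :
    ∀ h : B → ℝ, Continuous h →
      Tendsto (fun n => ∫ x in A n, h x * f n x ∂(μ n)) atTop
        (𝓝 (∫ x in Ainf, h x * g x ∂μinf)) := by
  classical
  intro h hh
  -- Tietze extension of g
  obtain ⟨G, hGr⟩ := ContinuousMap.exists_restrict_eq (Y := ℝ) hAinfc.isClosed
    ⟨Ainf.restrict g, hgc.restrict⟩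
  have hGg : ∀ x ∈ Ainf, G x = g x := fun x hx => DFunLike.congr_fun hGr ⟨x, hx⟩
  have hGc : Continuous (G : B → ℝ) := G.continuous
  -- edist finiteness
  have hedist : ∀ n, EMetric.hausdorffEdist (A n) Ainf ≠ ⊤ := fun n =>
    hausdorffEdist_ne_top_of_nonempty_of_bounded (hAne n) hAinfne
      (hAc n).isBounded hAinfc.isBounded
  -- key uniform convergence lemma
  have key : ∀ ε > (0:ℝ), ∀ᶠ n in atTop, ∀ x ∈ A n, |f n x - G x| ≤ ε := by
    by_contra hcon
    push_neg at hcon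
    obtain ⟨ε, hε, hfreq⟩ := hcon
    have hfreq' : ∃ᶠ n in atTop, ∃ x ∈ A n, ε < |f n x - G x| := by
      apply hfreq.mono
      intro n hn
      exact hn
    obtain ⟨φ, hφ, hP⟩ := Filter.extraction_of_frequently_atTop hfreq'
    choose x hxA hxε using hP
    obtain ⟨a, -, ψ, hψ, hxa⟩ := isCompact_univ.tendsto_subseq (x := x) (fun n => trivial)
    -- a ∈ Ainf
    have hφψ : StrictMono (φ ∘ ψ) := hφ.comp hψ
    have htend0 : Tendsto (fun k => Metric.hausdorffDist (A (φ (ψ k))) Ainf) atTop (𝓝 0) :=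
      hH.comp hφψ.tendsto_atTop
    have haA : a ∈ Ainf := by
      rw [hAinfc.isClosed.mem_iff_infDist_zero hAinfne]
      have h1 : Tendsto (fun k => infDist (x (ψ k)) Ainf) atTop (𝓝 (infDist a Ainf)) :=
        ((continuous_infDist_pt Ainf).tendsto a).comp hxa
      have h2 : infDist a Ainf ≤ 0 := by
        refine le_of_tendsto_of_tendsto h1 htend0 ?_
        filter_upwards with k
        exact infDist_le_hausdorffDist_of_mem (hxA (ψ k)) (hedist _)
      exact le_antisymm h2 infDist_nonneg
    -- approximating points
    have hy : ∀ n, ∃ y ∈ A n, infDist a (A n) = dist a y := fun n =>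
      (hAc n).exists_infDist_eq_dist (hAne n) a
    choose y hyA hyd using hy
    have hytend : Tendsto y atTop (𝓝 a) := by
      rw [tendsto_iff_dist_tendsto_zero]
      have hb : ∀ n, dist (y n) a ≤ Metric.hausdorffDist (A n) Ainf := by
        intro n
        rw [dist_comm, ← hyd n]
        calc infDist a (A n) ≤ Metric.hausdorffDist Ainf (A n) :=
              infDist_le_hausdorffDist_of_mem haA
                (by rw [EMetric.hausdorffEdist_comm]; exact hedist n)
          _ = Metric.hausdorffDist (A n) Ainf := hausdorffDist_comm
      exact squeeze_zero (fun n => dist_nonneg) hb hH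
    -- merged sequence
    set xs : ℕ → B := fun n => if hk : ∃ k, φ (ψ k) = n then x (ψ hk.choose) else y n with hxs
    have hxsA : ∀ n, xs n ∈ A n := by
      intro n
      by_cases hk : ∃ k, φ (ψ k) = n
      · simp only [hxs, dif_pos hk]
        have := hxA (ψ hk.choose)
        rwa [hk.choose_spec] at this
      · simp only [hxs, dif_neg hk]
        exact hyA n
    have hxsa : Tendsto xs atTop (𝓝 a) := by
      rw [Metric.tendsto_atTop]
      intro ε' hε'
      obtain ⟨N1, hN1⟩ := (Metric.tendsto_atTop.1 hytend) ε' hε'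
      obtain ⟨K, hK⟩ := (Metric.tendsto_atTop.1 hxa) ε' hε'
      refine ⟨max N1 (φ (ψ K)), fun n hn => ?_⟩
      by_cases hk : ∃ k, φ (ψ k) = n
      · simp only [hxs, dif_pos hk]
        have hkk : K ≤ hk.choose := by
          by_contra hlt
          push_neg at hlt
          have := hφψ hlt
          simp only [Function.comp] at this
          rw [hk.choose_spec] at this
          exact absurd (le_trans (le_max_right N1 (φ (ψ K))) hn) (not_le.2 this)
        exact hK hk.choose hkk
      · simp only [hxs, dif_neg hk]
        exact hN1 n (le_trans (le_max_left _ _) hn)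
    have hfx : Tendsto (fun n => f n (xs n)) atTop (𝓝 (g a)) := hconv a haA xs hxsA hxsa
    have hfx' : Tendsto (fun k => f (φ (ψ k)) (x (ψ k))) atTop (𝓝 (g a)) := by
      have := hfx.comp hφψ.tendsto_atTop
      refine this.congr ?_
      intro k
      simp only [Function.comp]
      have hk : ∃ k', φ (ψ k') = φ (ψ k) := ⟨k, rfl⟩
      simp only [hxs, dif_pos hk]
      have hck : hk.choose = k := hψ.injective (hφ.injective hk.choose_spec)
      rw [hck]
    have hGx : Tendsto (fun k => G (x (ψ k))) atTop (𝓝 (g a)) := by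
      have := (hGc.tendsto a).comp hxa
      rwa [hGg a haA] at this
    have hdiff : Tendsto (fun k => |f (φ (ψ k)) (x (ψ k)) - G (x (ψ k))|) atTop (𝓝 0) := by
      have := (hfx'.sub hGx).abs
      simpa using this
    have : ε ≤ 0 := le_of_tendsto_of_tendsto tendsto_const_nhds hdiff
      (Filter.Eventually.of_forall fun k => (hxε (ψ k)).le)
    linarith
  -- bound on h
  obtain ⟨C, hC⟩ := isCompact_univ.exists_bound_of_continuousOn hh.continuousOn
  have hC0 : 0 ≤ C := le_trans (norm_nonneg _) (hC hAinfne.choose trivial)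
  -- decomposition
  have hmeas : ∀ n, MeasurableSet (A n) := fun n => (hAc n).measurableSet
  have hint1 : ∀ n, IntegrableOn (fun x => h x * f n x) (A n) (μ n) := fun n =>
    ContinuousOn.integrableOn_compact (hAc n) (hh.continuousOn.mul (hfc n))
  have hint2 : ∀ n, IntegrableOn (fun x => h x * G x) (A n) (μ n) := fun n =>
    ContinuousOn.integrableOn_compact (hAc n) (hh.mul hGc).continuousOn
  have hrestr : ∀ n, (μ n).restrict (A n) = μ n := by
    intro n
    apply Measure.restrict_eq_self_of_ae_mem
    rw [MeasureTheory.ae_iff]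
    exact (hsupp n).1
  have hrestrinf : μinf.restrict Ainf = μinf := by
    apply Measure.restrict_eq_self_of_ae_mem
    rw [MeasureTheory.ae_iff]
    exact hsuppinf.1
  have hsplit : ∀ n, ∫ x in A n, h x * f n x ∂(μ n) =
      (∫ x in A n, (h x * f n x - h x * G x) ∂(μ n)) + ∫ x, h x * G x ∂(μ n) := by
    intro n
    rw [integral_sub (hint1 n) (hint2 n)]
    have : ∫ x in A n, h x * G x ∂(μ n) = ∫ x, h x * G x ∂(μ n) := by
      conv_rhs => rw [← hrestr n]
    rw [this]
    ring
  have hlim2 : Tendsto (fun n => ∫ x, h x * G x ∂(μ n)) atTop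
      (𝓝 (∫ x in Ainf, h x * g x ∂μinf)) := by
    have := hweak (fun x => h x * G x) (hh.mul hGc)
    have heq : ∫ x, h x * G x ∂μinf = ∫ x in Ainf, h x * g x ∂μinf := by
      have e1 : ∫ x, h x * G x ∂μinf = ∫ x in Ainf, h x * G x ∂μinf := by
        conv_lhs => rw [← hrestrinf]
      rw [e1]
      refine setIntegral_congr_fun hAinfc.measurableSet ?_
      intro x hx
      simp only [hGg x hx]
    rwa [heq] at this
  have hlim1 : Tendsto (fun n => ∫ x in A n, (h x * f n x - h x * G x) ∂(μ n)) atTop (𝓝 0) := by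
    rw [NormedAddCommGroup.tendsto_nhds_zero]
    intro ε hε
    have hε' : (0:ℝ) < ε / (2 * (C + 1)) := by positivity
    filter_upwards [key _ hε'] with n hn
    have hb : ‖∫ x in A n, (h x * f n x - h x * G x) ∂(μ n)‖ ≤
        (C * (ε / (2 * (C + 1)))) * ((μ n) (A n)).toReal := by
      apply norm_setIntegral_le_of_norm_le_const
      · exact lt_of_le_of_lt prob_le_one (by norm_num)
      · intro x hx
        rw [show h x * f n x - h x * G x = h x * (f n x - G x) by ring]
        rw [norm_mul]
        exact mul_le_mul (hC x trivial) (hn x hx) (norm_nonneg _) hC0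
    have hμ1 : ((μ n) (A n)).toReal ≤ 1 := by
      have := prob_le_one (μ := μ n) (s := A n)
      simpa using ENNReal.toReal_le_of_le_ofReal zero_le_one (by simpa using this)
    calc ‖∫ x in A n, (h x * f n x - h x * G x) ∂(μ n)‖
        ≤ (C * (ε / (2 * (C + 1)))) * ((μ n) (A n)).toReal := hb
      _ ≤ (C * (ε / (2 * (C + 1)))) * 1 := by
          apply mul_le_mul_of_nonneg_left hμ1 (by positivity)
      _ < ε := by
          rw [mul_one]
          rw [div_eq_mul_inv]
          have : C * (ε * (2 * (C + 1))⁻¹) = ε * (C / (2 * (C + 1))) := by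
            field_simp
          rw [this]
          have hlt : C / (2 * (C + 1)) < 1 := by
            rw [div_lt_one (by positivity)]
            linarith
          nlinarith [mul_lt_mul_of_pos_left hlt hε]
  have := hlim1.add hlim2
  rw [zero_add] at this
  exact this.congr (fun n => (hsplit n).symm)
end

section
/- Let V be a finite set with #V = N ≥ 2 and let E_1, E_2 be resistance forms on V with effective resistances R_1, R_2 respectively. Then for every f ∈ l(V): (2/(N(N−1)))·min_{x≠y∈V} (R_1(x,y)/R_2(x,y))·E_1(f) ≤ E_2(f) ≤ (N(N−1)/2)·max_{x≠y∈V} (R_1(x,y)/R_2(x,y))·E_1(f). -/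
open Filter Topology

/-- The energy `E(f) = (1/2) ∑_{x,y} c x y (f x − f y)²` of a conductance
matrix `c` on a finite set `V` (diagonal terms vanish automatically). -/
noncomputable def finEnergy {V : Type*} [Fintype V] (c : V → V → ℝ) (f : V → ℝ) : ℝ :=
  (1 / 2) * ∑ x : V, ∑ y : V, c x y * (f x - f y) ^ 2

/-- `c` defines a resistance form on the finite set `V`: the conductances are
symmetric and nonnegative, and the energy vanishes exactly on constants. -/
def IsFinResistanceForm {V : Type*} [Fintype V] (c : V → V → ℝ) : Prop :=
  (∀ x y, c x y = c y x) ∧ (∀ x y, 0 ≤ c x y) ∧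
  ∀ f : V → ℝ, finEnergy c f = 0 ↔ ∃ a : ℝ, ∀ x, f x = a

/-- `R` is the effective resistance of the resistance form with conductances `c`:
for `x ≠ y`, `R x y = sup { (f x − f y)²/E(f) : f non-constant }`. -/
def IsEffectiveResistance {V : Type*} [Fintype V] (c : V → V → ℝ) (R : V → V → ℝ) : Prop :=
  ∀ x y, x ≠ y →
    IsLUB {t : ℝ | ∃ f : V → ℝ, (¬∃ a : ℝ, ∀ z, f z = a) ∧
      t = (f x - f y) ^ 2 / finEnergy c f} (R x y)

section Aux
variable {V : Type*} [Fintype V]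

lemma energy_nonneg (c : V → V → ℝ) (hc : ∀ x y, 0 ≤ c x y) (f : V → ℝ) :
    0 ≤ finEnergy c f := by
  have h : 0 ≤ ∑ x : V, ∑ y : V, c x y * (f x - f y) ^ 2 :=
    Finset.sum_nonneg fun x _ => Finset.sum_nonneg fun y _ =>
      mul_nonneg (hc x y) (sq_nonneg _)
  unfold finEnergy; linarith

lemma energy_pos (c : V → V → ℝ) (h : IsFinResistanceForm c) (f : V → ℝ)
    (hf : ¬∃ a : ℝ, ∀ x, f x = a) : 0 < finEnergy c f := by
  rcases (energy_nonneg c h.2.1 f).lt_or_eq with h' | h'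
  · exact h'
  · exact absurd ((h.2.2 f).1 h'.symm) hf

lemma term_le_energy (c : V → V → ℝ) (h : IsFinResistanceForm c) (f : V → ℝ)
    {x y : V} (hxy : x ≠ y) :
    c x y * (f x - f y) ^ 2 ≤ finEnergy c f := by
  classical
  have hprod : ∑ x : V, ∑ y : V, c x y * (f x - f y) ^ 2
      = ∑ p ∈ Finset.univ ×ˢ (Finset.univ : Finset V), c p.1 p.2 * (f p.1 - f p.2) ^ 2 := by
    rw [Finset.sum_product]
  have hsub : ({(x, y), (y, x)} : Finset (V × V)) ⊆ Finset.univ ×ˢ Finset.univ := by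
    intro p _; simp
  have hne : ((x, y) : V × V) ≠ (y, x) := by
    intro hcontra; exact hxy (congrArg Prod.fst hcontra)
  have hle := Finset.sum_le_sum_of_subset_of_nonneg hsub
    (fun p _ _ => mul_nonneg (h.2.1 p.1 p.2) (sq_nonneg _))
    (f := fun p : V × V => c p.1 p.2 * (f p.1 - f p.2) ^ 2)
  rw [Finset.sum_pair hne] at hle
  have hsym : c y x = c x y := (h.1 y x)
  have hsq : (f y - f x) ^ 2 = (f x - f y) ^ 2 := by ring
  rw [hsym, hsq] at hle
  unfold finEnergy
  rw [hprod]
  linarith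

lemma sq_le_R_mul_energy (c : V → V → ℝ) (R : V → V → ℝ)
    (h : IsFinResistanceForm c) (hR : IsEffectiveResistance c R) (f : V → ℝ)
    {x y : V} (hxy : x ≠ y) :
    (f x - f y) ^ 2 ≤ R x y * finEnergy c f := by
  by_cases hf : ∃ a : ℝ, ∀ z, f z = a
  · obtain ⟨a, ha⟩ := hf
    have hE : finEnergy c f = 0 := (h.2.2 f).2 ⟨a, ha⟩
    rw [ha x, ha y, hE]; simp
  · have hE := energy_pos c h f hf
    have hmem : (f x - f y) ^ 2 / finEnergy c f ∈
        {t : ℝ | ∃ g : V → ℝ, (¬∃ a : ℝ, ∀ z, g z = a) ∧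
          t = (g x - g y) ^ 2 / finEnergy c g} := ⟨f, hf, rfl⟩
    have hle := (hR x y hxy).1 hmem
    calc (f x - f y) ^ 2 = ((f x - f y) ^ 2 / finEnergy c f) * finEnergy c f := by
          field_simp
      _ ≤ R x y * finEnergy c f := mul_le_mul_of_nonneg_right hle hE.le

lemma R_pos (c : V → V → ℝ) (R : V → V → ℝ)
    (h : IsFinResistanceForm c) (hR : IsEffectiveResistance c R)
    {x y : V} (hxy : x ≠ y) : 0 < R x y := by
  classical
  set f : V → ℝ := fun z => if z = x then 1 else 0 with hfdef
  have hfx : f x = 1 := by simp [hfdef]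
  have hfy : f y = 0 := by simp [hfdef, hxy.symm]
  have hf : ¬∃ a : ℝ, ∀ z, f z = a := by
    rintro ⟨a, ha⟩
    have h1 := ha x; have h2 := ha y
    rw [hfx] at h1; rw [hfy] at h2; linarith
  have hE := energy_pos c h f hf
  have hmem : (f x - f y) ^ 2 / finEnergy c f ∈
      {t : ℝ | ∃ g : V → ℝ, (¬∃ a : ℝ, ∀ z, g z = a) ∧
        t = (g x - g y) ^ 2 / finEnergy c g} := ⟨f, hf, rfl⟩
  have hle := (hR x y hxy).1 hmem
  have hpos : 0 < (f x - f y) ^ 2 / finEnergy c f := by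
    rw [hfx, hfy]
    apply div_pos (by norm_num) hE
  linarith

lemma cR_le_one (c : V → V → ℝ) (R : V → V → ℝ)
    (h : IsFinResistanceForm c) (hR : IsEffectiveResistance c R)
    {x y : V} (hxy : x ≠ y) : c x y * R x y ≤ 1 := by
  rcases (h.2.1 x y).lt_or_eq with hc | hc
  · have hub : R x y ≤ 1 / c x y := by
      refine (hR x y hxy).2 ?_
      rintro t ⟨g, hg, rfl⟩
      have hE := energy_pos c h g hg
      have hterm := term_le_energy c h g hxy
      rw [div_le_div_iff₀ hE hc]
      nlinarith
    have h5 := mul_le_mul_of_nonneg_left hub hc.le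
    have h6 : c x y * (1 / c x y) = 1 := by field_simp
    linarith
  · rw [← hc]; norm_num

lemma main_bound (c₁ c₂ : V → V → ℝ) (R₁ R₂ : V → V → ℝ)
    (h₁ : IsFinResistanceForm c₁) (h₂ : IsFinResistanceForm c₂)
    (hR₁ : IsEffectiveResistance c₁ R₁) (hR₂ : IsEffectiveResistance c₂ R₂)
    (K : ℝ) (hK0 : 0 ≤ K) (hK : ∀ x y : V, x ≠ y → R₁ x y ≤ K * R₂ x y) (f : V → ℝ) :
    finEnergy c₂ f ≤ ((Fintype.card V : ℝ) * ((Fintype.card V : ℝ) - 1) / 2) * K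
      * finEnergy c₁ f := by
  classical
  set A := K * finEnergy c₁ f with hA
  have hE₁ : 0 ≤ finEnergy c₁ f := energy_nonneg c₁ h₁.2.1 f
  have hA0 : 0 ≤ A := mul_nonneg hK0 hE₁
  have hterm : ∀ x y : V, c₂ x y * (f x - f y) ^ 2 ≤ if x = y then 0 else A := by
    intro x y
    by_cases hxy : x = y
    · simp [hxy]
    · simp only [if_neg hxy]
      have h1 : (f x - f y) ^ 2 ≤ R₁ x y * finEnergy c₁ f :=
        sq_le_R_mul_energy c₁ R₁ h₁ hR₁ f hxy
      have h2 : R₁ x y * finEnergy c₁ f ≤ K * R₂ x y * finEnergy c₁ f :=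
        mul_le_mul_of_nonneg_right (hK x y hxy) hE₁
      have h3 : c₂ x y * (f x - f y) ^ 2 ≤ c₂ x y * (K * R₂ x y * finEnergy c₁ f) :=
        mul_le_mul_of_nonneg_left (h1.trans h2) (h₂.2.1 x y)
      have h4 : c₂ x y * R₂ x y ≤ 1 := cR_le_one c₂ R₂ h₂ hR₂ hxy
      have h5 := mul_le_mul_of_nonneg_right h4 hA0
      have h6 : c₂ x y * (K * R₂ x y * finEnergy c₁ f) = c₂ x y * R₂ x y * A := by
        rw [hA]; ring
      rw [h6] at h3; rw [one_mul] at h5; linarith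
  have hsum : ∑ x : V, ∑ y : V, c₂ x y * (f x - f y) ^ 2
      ≤ ∑ x : V, ∑ y : V, (if x = y then (0 : ℝ) else A) :=
    Finset.sum_le_sum fun x _ => Finset.sum_le_sum fun y _ => hterm x y
  have hcount : ∀ x : V, (∑ y : V, (if x = y then (0 : ℝ) else A))
      = ((Fintype.card V : ℝ) - 1) * A := by
    intro x
    have heq : ∀ y : V, (if x = y then (0 : ℝ) else A)
        = A - (if x = y then A else 0) := by
      intro y; by_cases h : x = y <;> simp [h]
    simp only [heq]
    rw [Finset.sum_sub_distrib, Finset.sum_const, Finset.sum_ite_eq]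
    simp [Finset.card_univ, nsmul_eq_mul]
    ring
  have hrhs : ∑ x : V, ∑ y : V, (if x = y then (0 : ℝ) else A)
      = (Fintype.card V : ℝ) * (((Fintype.card V : ℝ) - 1) * A) := by
    simp only [hcount]
    rw [Finset.sum_const, Finset.card_univ, nsmul_eq_mul]
  rw [hrhs, hA] at hsum
  calc finEnergy c₂ f = (1 / 2) * ∑ x : V, ∑ y : V, c₂ x y * (f x - f y) ^ 2 := rfl
    _ ≤ (1 / 2) * ((Fintype.card V : ℝ)
        * (((Fintype.card V : ℝ) - 1) * (K * finEnergy c₁ f))) := by linarith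
    _ = ((Fintype.card V : ℝ) * ((Fintype.card V : ℝ) - 1) / 2) * K
        * finEnergy c₁ f := by ring

end Aux

/-- Comparison of two resistance forms on a finite set `V`
(`#V = N ≥ 2`) through their effective resistances: for every `f ∈ l(V)`,
`(2/(N(N−1))) · min_{x≠y} (R₁(x,y)/R₂(x,y)) · E₁(f) ≤ E₂(f)
  ≤ (N(N−1)/2) · max_{x≠y} (R₁(x,y)/R₂(x,y)) · E₁(f)`. -/


theorem stmt4 {V : Type*} [Fintype V] (N : ℕ) (hN : N = Fintype.card V) (hN2 : 2 ≤ N)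
    (c₁ c₂ : V → V → ℝ)
    (h₁ : IsFinResistanceForm c₁) (h₂ : IsFinResistanceForm c₂)
    (R₁ R₂ : V → V → ℝ)
    (hR₁ : IsEffectiveResistance c₁ R₁) (hR₂ : IsEffectiveResistance c₂ R₂)
    (m M : ℝ)
    (hm : IsLeast {t : ℝ | ∃ x y : V, x ≠ y ∧ t = R₁ x y / R₂ x y} m)
    (hM : IsGreatest {t : ℝ | ∃ x y : V, x ≠ y ∧ t = R₁ x y / R₂ x y} M) :
    ∀ f : V → ℝ,
      (2 / ((N : ℝ) * ((N : ℝ) - 1))) * m * finEnergy c₁ f ≤ finEnergy c₂ f ∧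
      finEnergy c₂ f ≤ ((N : ℝ) * ((N : ℝ) - 1) / 2) * M * finEnergy c₁ f := by
  intro f
  have hcard : (Fintype.card V : ℝ) = (N : ℝ) := by rw [hN]
  have hNr : (2 : ℝ) ≤ (N : ℝ) := by exact_mod_cast hN2
  have hD : 0 < (N : ℝ) * ((N : ℝ) - 1) := by nlinarith
  -- m > 0
  obtain ⟨x₀, y₀, hxy₀, hm0eq⟩ := hm.1
  have hm0 : 0 < m := by
    rw [hm0eq]
    exact div_pos (R_pos c₁ R₁ h₁ hR₁ hxy₀) (R_pos c₂ R₂ h₂ hR₂ hxy₀)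
  have hM0 : 0 < M := lt_of_lt_of_le hm0 (hm.2 hM.1)
  constructor
  · -- lower bound : swap roles, K = 1/m
    have hK : ∀ x y : V, x ≠ y → R₂ x y ≤ (1 / m) * R₁ x y := by
      intro x y hxy
      have hmem : R₁ x y / R₂ x y ∈
          {t : ℝ | ∃ a b : V, a ≠ b ∧ t = R₁ a b / R₂ a b} := ⟨x, y, hxy, rfl⟩
      have hle := hm.2 hmem
      have hR2p := R_pos c₂ R₂ h₂ hR₂ hxy
      rw [le_div_iff₀ hR2p] at hle
      rw [div_mul_eq_mul_div, le_div_iff₀ hm0]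
      nlinarith
    have hmain := main_bound c₂ c₁ R₂ R₁ h₂ h₁ hR₂ hR₁ (1 / m)
      (by positivity) hK f
    rw [hcard] at hmain
    have hfac : 0 < 2 * m / ((N : ℝ) * ((N : ℝ) - 1)) := by positivity
    have := mul_le_mul_of_nonneg_left hmain hfac.le
    have heq : 2 * m / ((N : ℝ) * ((N : ℝ) - 1))
        * ((N : ℝ) * ((N : ℝ) - 1) / 2 * (1 / m) * finEnergy c₂ f)
        = finEnergy c₂ f := by
      have hN1 : (N : ℝ) - 1 ≠ 0 := by linarith
      field_simp
    rw [heq] at this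
    calc (2 / ((N : ℝ) * ((N : ℝ) - 1))) * m * finEnergy c₁ f
        = 2 * m / ((N : ℝ) * ((N : ℝ) - 1)) * finEnergy c₁ f := by ring
      _ ≤ finEnergy c₂ f := this
  · have hK : ∀ x y : V, x ≠ y → R₁ x y ≤ M * R₂ x y := by
      intro x y hxy
      have hmem : R₁ x y / R₂ x y ∈
          {t : ℝ | ∃ a b : V, a ≠ b ∧ t = R₁ a b / R₂ a b} := ⟨x, y, hxy, rfl⟩
      have hle := hM.2 hmem
      have hR2p := R_pos c₂ R₂ h₂ hR₂ hxy
      rw [div_le_iff₀ hR2p] at hle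
      linarith
    have hmain := main_bound c₁ c₂ R₁ R₂ h₁ h₂ hR₁ hR₂ M hM0.le hK f
    rw [hcard] at hmain
    exact hmain
end

section
/- Let V be a finite set with #V ≥ 2. For each n ≥ 1 let E_n be a resistance form on V with effective resistance R_n, and let R be a metric on V such that R_n(x,y) → R(x,y) for all x,y ∈ V. Then there exists a resistance form E on V whose effective resistance is R, and moreover E_n(f) → E(f) for every f ∈ l(V). -/
open Filter Topology

set_option linter.unusedSectionVars false

section Aux

variable {V : Type*} [Fintype V]

/-- The set of quotients whose LUB is the effective resistance. -/
def resSet (c : V → V → ℝ) (x y : V) : Set ℝ :=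
  {t : ℝ | ∃ f : V → ℝ, (¬∃ a : ℝ, ∀ z, f z = a) ∧
    t = (f x - f y) ^ 2 / finEnergy c f}

/-- The bilinear form associated with the energy. -/
noncomputable def finB (c : V → V → ℝ) (f g : V → ℝ) : ℝ :=
  (1 / 2) * ∑ x : V, ∑ y : V, c x y * ((f x - f y) * (g x - g y))

lemma finB_self (c : V → V → ℝ) (f : V → ℝ) : finB c f f = finEnergy c f := by
  unfold finB finEnergy
  congr 1
  exact Finset.sum_congr rfl fun x _ => Finset.sum_congr rfl fun y _ => by ring

lemma finB_comm (c : V → V → ℝ) (f g : V → ℝ) : finB c f g = finB c g f := by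
  unfold finB
  congr 1
  exact Finset.sum_congr rfl fun x _ => Finset.sum_congr rfl fun y _ => by ring

lemma finB_right_lin (c : V → V → ℝ) (f g₁ g₂ : V → ℝ) (a b : ℝ) :
    finB c f (fun z => a * g₁ z + b * g₂ z)
      = a * finB c f g₁ + b * finB c f g₂ := by
  unfold finB
  have h : ∀ x y : V, c x y * ((f x - f y) * ((a * g₁ x + b * g₂ x) - (a * g₁ y + b * g₂ y)))
      = a * (c x y * ((f x - f y) * (g₁ x - g₁ y)))
        + b * (c x y * ((f x - f y) * (g₂ x - g₂ y))) := by
    intro x y; ring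
  simp_rw [h, Finset.sum_add_distrib, ← Finset.mul_sum]
  ring

lemma finB_left_lin (c : V → V → ℝ) (f₁ f₂ g : V → ℝ) (a b : ℝ) :
    finB c (fun z => a * f₁ z + b * f₂ z) g
      = a * finB c f₁ g + b * finB c f₂ g := by
  rw [finB_comm, finB_right_lin, finB_comm c g f₁, finB_comm c g f₂]

lemma finB_const_right (c : V → V → ℝ) (f : V → ℝ) (t : ℝ) :
    finB c f (fun _ => t) = 0 := by
  unfold finB
  simp

lemma finB_const_left (c : V → V → ℝ) (f : V → ℝ) (t : ℝ) :
    finB c (fun _ => t) f = 0 := by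
  rw [finB_comm, finB_const_right]

lemma finEnergy_expand (c : V → V → ℝ) (f h : V → ℝ) (t : ℝ) :
    finEnergy c (fun z => f z + t * h z)
      = finEnergy c f + 2 * t * finB c f h + t ^ 2 * finEnergy c h := by
  unfold finEnergy finB
  have hh : ∀ x y : V, c x y * ((f x + t * h x) - (f y + t * h y)) ^ 2
      = c x y * (f x - f y) ^ 2 + (2 * t) * (c x y * ((f x - f y) * (h x - h y)))
        + t ^ 2 * (c x y * (h x - h y) ^ 2) := by intro x y; ring
  simp_rw [hh, Finset.sum_add_distrib, ← Finset.mul_sum]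
  ring

lemma finEnergy_const (c : V → V → ℝ) (t : ℝ) : finEnergy c (fun _ => t) = 0 := by
  unfold finEnergy
  simp

lemma finEnergy_nonneg {c : V → V → ℝ} (hc : ∀ x y, 0 ≤ c x y) (f : V → ℝ) :
    0 ≤ finEnergy c f := by
  unfold finEnergy
  have h : (0:ℝ) ≤ ∑ x : V, ∑ y : V, c x y * (f x - f y) ^ 2 :=
    Finset.sum_nonneg fun x _ => Finset.sum_nonneg fun y _ =>
      mul_nonneg (hc x y) (sq_nonneg _)
  linarith

lemma finEnergy_pos {c : V → V → ℝ} (hc : IsFinResistanceForm c) {f : V → ℝ}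
    (hf : ¬∃ a : ℝ, ∀ z, f z = a) : 0 < finEnergy c f :=
  lt_of_le_of_ne (finEnergy_nonneg hc.2.1 f) fun h => hf ((hc.2.2 f).mp h.symm)

lemma finEnergy_affine (c : V → V → ℝ) (f : V → ℝ) (s t0 : ℝ) :
    finEnergy c (fun z => s * f z + t0) = s ^ 2 * finEnergy c f := by
  have h : (fun z => s * f z + t0) = (fun z => (fun _ : V => t0) z + s * f z) := by
    funext z; ring
  rw [h, finEnergy_expand, finEnergy_const, finB_const_left]
  ring

lemma finB_sq_le {c : V → V → ℝ} (hc : ∀ x y, 0 ≤ c x y) (f h : V → ℝ) :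
    (finB c f h) ^ 2 ≤ finEnergy c f * finEnergy c h := by
  have key : ∀ t : ℝ, 0 ≤ finEnergy c h * (t * t) + (2 * finB c f h) * t + finEnergy c f := by
    intro t
    have h1 := finEnergy_nonneg hc (fun z => f z + t * h z)
    rw [finEnergy_expand] at h1
    nlinarith [h1]
  have hd := discrim_le_zero key
  unfold discrim at hd
  nlinarith [hd]

lemma finB_eq_zero_of_min {c : V → V → ℝ} (hc : ∀ x y, 0 ≤ c x y) {g h : V → ℝ}
    (hmin : ∀ t : ℝ, finEnergy c g ≤ finEnergy c (fun z => g z + t * h z)) :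
    finB c g h = 0 := by
  have key : ∀ t : ℝ, 0 ≤ finEnergy c h * (t * t) + (2 * finB c g h) * t + 0 := by
    intro t
    have h1 := hmin t
    rw [finEnergy_expand] at h1
    nlinarith [h1]
  have hd := discrim_le_zero key
  unfold discrim at hd
  have h2 : finB c g h ^ 2 ≤ 0 := by nlinarith [hd]
  have h3 : finB c g h ^ 2 = 0 := le_antisymm h2 (sq_nonneg _)
  exact (pow_eq_zero_iff two_ne_zero).mp h3

lemma nonconst_of_ne {f : V → ℝ} {x y : V} (h : f x ≠ f y) : ¬∃ a : ℝ, ∀ z, f z = a :=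
  fun ⟨a, ha⟩ => h (by rw [ha x, ha y])

open Classical in
/-- indicator function -/
noncomputable def ind (x : V) : V → ℝ := fun z => if z = x then 1 else 0

lemma ind_self (x : V) : ind x x = 1 := if_pos rfl

lemma ind_ne {x z : V} (h : z ≠ x) : ind x z = 0 := if_neg h

end Aux

section Aux2

variable {V : Type*} [Fintype V]

lemma R_pos_s5 {c : V → V → ℝ} (hc : IsFinResistanceForm c) {x y : V} (hxy : x ≠ y) {r : ℝ}
    (hr : IsLUB (resSet c x y) r) : 0 < r := by
  have hfx : ind x x = (1:ℝ) := ind_self x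
  have hfy : ind x y = (0:ℝ) := ind_ne (Ne.symm hxy)
  have hnc : ¬∃ a : ℝ, ∀ z, ind x z = a :=
    nonconst_of_ne (x := x) (y := y) (by rw [hfx, hfy]; norm_num)
  have hE := finEnergy_pos hc hnc
  have hmem : (ind x x - ind x y) ^ 2 / finEnergy c (ind x) ∈ resSet c x y :=
    ⟨ind x, hnc, rfl⟩
  have h1 := hr.1 hmem
  have h2 : 0 < (ind x x - ind x y) ^ 2 / finEnergy c (ind x) := by
    rw [hfx, hfy]
    norm_num
    exact hE
  linarith

lemma sq_le_R_mul {c : V → V → ℝ} (hc : IsFinResistanceForm c) {x y : V} {r : ℝ}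
    (hr : IsLUB (resSet c x y) r) {f : V → ℝ} (hnc : ¬∃ a : ℝ, ∀ z, f z = a) :
    (f x - f y) ^ 2 ≤ r * finEnergy c f := by
  have hE := finEnergy_pos hc hnc
  have ht := hr.1 ⟨f, hnc, rfl⟩
  calc (f x - f y) ^ 2 = ((f x - f y) ^ 2 / finEnergy c f) * finEnergy c f := by
        field_simp
    _ ≤ r * finEnergy c f := mul_le_mul_of_nonneg_right ht hE.le

lemma cond_le {c : V → V → ℝ} (hc : IsFinResistanceForm c) {x y : V} (hxy : x ≠ y) {r : ℝ}
    (hr : IsLUB (resSet c x y) r) : c x y ≤ 1 / r := by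
  classical
  have hrpos : 0 < r := R_pos_s5 hc hxy hr
  rcases le_or_gt (c x y) 0 with h | h
  · exact le_trans h (by positivity)
  · -- E f ≥ c x y * (f x - f y)^2
    have hEge : ∀ f : V → ℝ, c x y * (f x - f y) ^ 2 ≤ finEnergy c f := by
      intro f
      have hF : ∀ a b : V, (0:ℝ) ≤ c a b * (f a - f b) ^ 2 := fun a b =>
        mul_nonneg (hc.2.1 a b) (sq_nonneg _)
      have hkey : c x y * (f x - f y) ^ 2 + c y x * (f y - f x) ^ 2
          ≤ ∑ a : V, ∑ b : V, c a b * (f a - f b) ^ 2 := by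
        calc c x y * (f x - f y) ^ 2 + c y x * (f y - f x) ^ 2
            ≤ (∑ b : V, c x b * (f x - f b) ^ 2) + ∑ b : V, c y b * (f y - f b) ^ 2 :=
              add_le_add (Finset.single_le_sum (fun b _ => hF x b) (Finset.mem_univ y))
                (Finset.single_le_sum (fun b _ => hF y b) (Finset.mem_univ x))
          _ = ∑ a ∈ ({x, y} : Finset V), ∑ b : V, c a b * (f a - f b) ^ 2 :=
              (Finset.sum_pair (f := fun a => ∑ b : V, c a b * (f a - f b) ^ 2) hxy).symm
          _ ≤ ∑ a : V, ∑ b : V, c a b * (f a - f b) ^ 2 :=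
              Finset.sum_le_sum_of_subset_of_nonneg (Finset.subset_univ _)
                (fun a _ _ => Finset.sum_nonneg fun b _ => hF a b)
      have hsymm : c y x * (f y - f x) ^ 2 = c x y * (f x - f y) ^ 2 := by
        rw [← hc.1 x y]; ring
      unfold finEnergy
      rw [hsymm] at hkey
      linarith
    have hub : r ≤ 1 / c x y := by
      apply hr.2
      rintro t ⟨f, hnc, rfl⟩
      have hEf := finEnergy_pos hc hnc
      rw [div_le_div_iff₀ hEf h]
      have := hEge f
      nlinarith [this]
    rw [le_div_iff₀ hrpos]
    have h2 : c x y * r ≤ c x y * (1 / c x y) :=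
      mul_le_mul_of_nonneg_left hub h.le
    rw [mul_one_div_cancel h.ne'] at h2
    exact h2

lemma exists_min {c : V → V → ℝ} (hc : ∀ x y, 0 ≤ c x y) {x y : V} (hxy : x ≠ y) :
    ∃ g : V → ℝ, g x = 1 ∧ g y = 0 ∧ (∀ z, g z ∈ Set.Icc (0:ℝ) 1) ∧
      ∀ f : V → ℝ, f x = 1 → f y = 0 → finEnergy c g ≤ finEnergy c f := by
  classical
  set K : Set (V → ℝ) := {f | (∀ z, f z ∈ Set.Icc (0:ℝ) 1) ∧ f x = 1 ∧ f y = 0} with hK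
  have hKc : IsCompact K := by
    have h1 : IsCompact (Set.pi Set.univ fun _ : V => Set.Icc (0:ℝ) 1) :=
      isCompact_univ_pi fun _ => isCompact_Icc
    have h2 : IsClosed {f : V → ℝ | f x = 1 ∧ f y = 0} := by
      have e1 : IsClosed ((fun f : V → ℝ => f x) ⁻¹' {1}) :=
        IsClosed.preimage (continuous_apply x) isClosed_singleton
      have e2 : IsClosed ((fun f : V → ℝ => f y) ⁻¹' {0}) :=
        IsClosed.preimage (continuous_apply y) isClosed_singleton
      have : {f : V → ℝ | f x = 1 ∧ f y = 0}
          = ((fun f : V → ℝ => f x) ⁻¹' {1}) ∩ ((fun f : V → ℝ => f y) ⁻¹' {0}) := by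
        ext f; simp [Set.mem_preimage]
      rw [this]; exact e1.inter e2
    have hKeq : K = (Set.pi Set.univ fun _ : V => Set.Icc (0:ℝ) 1)
        ∩ {f : V → ℝ | f x = 1 ∧ f y = 0} := by
      ext f; simp [hK, Set.mem_pi, Set.mem_Icc, Pi.le_def, forall_and, and_assoc]
    rw [hKeq]; exact h1.inter_right h2
  have hcont : Continuous fun f : V → ℝ => finEnergy c f := by
    unfold finEnergy
    exact continuous_const.mul (continuous_finset_sum _ fun a _ =>
      continuous_finset_sum _ fun b _ =>
        continuous_const.mul (((continuous_apply a).sub (continuous_apply b)).pow 2))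
  have hne : K.Nonempty := by
    refine ⟨ind x, fun z => ?_, ind_self x, ind_ne (Ne.symm hxy)⟩
    unfold ind
    split_ifs <;> norm_num
  obtain ⟨g, hgK, hgmin⟩ := hKc.exists_isMinOn hne hcont.continuousOn
  obtain ⟨hgIcc, hgx, hgy⟩ := hgK
  -- clamping decreases energy
  have hstep : ∀ f : V → ℝ, finEnergy c (fun z => max 0 (min (f z) 1)) ≤ finEnergy c f := by
    intro f
    unfold finEnergy
    apply mul_le_mul_of_nonneg_left _ (by norm_num : (0:ℝ) ≤ 1/2)
    apply Finset.sum_le_sum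
    intro a _
    apply Finset.sum_le_sum
    intro b _
    apply mul_le_mul_of_nonneg_left _ (hc a b)
    have h1 : |max 0 (min (f a) 1) - max 0 (min (f b) 1)| ≤ |f a - f b| := by
      have h2 : |min (f a) 1 - min (f b) 1| ≤ |f a - f b| := by
        have h3 := abs_min_sub_min_le_max (f a) 1 (f b) 1
        simp only [sub_self, abs_zero] at h3
        simpa [max_eq_left (abs_nonneg (f a - f b))] using h3
      calc |max 0 (min (f a) 1) - max 0 (min (f b) 1)|
          = |max (min (f a) 1) 0 - max (min (f b) 1) 0| := by
            rw [max_comm 0, max_comm 0]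
        _ ≤ |min (f a) 1 - min (f b) 1| := abs_max_sub_max_le_abs _ _ _
        _ ≤ |f a - f b| := h2
    calc (max 0 (min (f a) 1) - max 0 (min (f b) 1)) ^ 2
        = |max 0 (min (f a) 1) - max 0 (min (f b) 1)| ^ 2 := (sq_abs _).symm
      _ ≤ |f a - f b| ^ 2 := pow_le_pow_left₀ (abs_nonneg _) h1 2
      _ = (f a - f b) ^ 2 := sq_abs _
  refine ⟨g, hgx, hgy, hgIcc, ?_⟩
  intro f hfx hfy
  have hfcK : (fun z => max 0 (min (f z) 1)) ∈ K := by
    refine ⟨fun z => ⟨le_max_left _ _, max_le (by norm_num) (min_le_right _ _)⟩, ?_, ?_⟩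
    · show max 0 (min (f x) 1) = 1
      rw [hfx]; norm_num
    · show max 0 (min (f y) 1) = 0
      rw [hfy]; norm_num
  exact le_trans (isMinOn_iff.mp hgmin _ hfcK) (hstep f)

lemma isLUB_inv_min {c : V → V → ℝ} (hc : IsFinResistanceForm c) {x y : V} (hxy : x ≠ y)
    {g : V → ℝ} (hgx : g x = 1) (hgy : g y = 0)
    (hmin : ∀ f : V → ℝ, f x = 1 → f y = 0 → finEnergy c g ≤ finEnergy c f) :
    IsLUB (resSet c x y) (1 / finEnergy c g) := by
  have hgnc : ¬∃ a : ℝ, ∀ z, g z = a :=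
    nonconst_of_ne (x := x) (y := y) (by rw [hgx, hgy]; norm_num)
  have hEg := finEnergy_pos hc hgnc
  refine IsGreatest.isLUB ⟨⟨g, hgnc, by rw [hgx, hgy]; norm_num⟩, ?_⟩
  rintro t ⟨f, hnc, rfl⟩
  have hEf := finEnergy_pos hc hnc
  by_cases hf : f x = f y
  · rw [hf]
    simp only [sub_self]
    rw [zero_pow two_ne_zero, zero_div]
    positivity
  · have hs0 : f x - f y ≠ 0 := sub_ne_zero.mpr hf
    have hfc : finEnergy c (fun z => (1/(f x - f y)) * f z + (-(f y)/(f x - f y)))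
        = (1/(f x - f y)) ^ 2 * finEnergy c f :=
      finEnergy_affine c f (1/(f x - f y)) (-(f y)/(f x - f y))
    have h1 : (fun z => (1/(f x - f y)) * f z + (-(f y)/(f x - f y))) x = 1 := by
      show (1/(f x - f y)) * f x + (-(f y)/(f x - f y)) = 1
      field_simp
      ring
    have h2 : (fun z => (1/(f x - f y)) * f z + (-(f y)/(f x - f y))) y = 0 := by
      show (1/(f x - f y)) * f y + (-(f y)/(f x - f y)) = 0
      field_simp
      ring
    have h3 := hmin (fun z => (1/(f x - f y)) * f z + (-(f y)/(f x - f y))) h1 h2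
    rw [hfc] at h3
    have h5 := mul_le_mul_of_nonneg_left h3 (sq_nonneg (f x - f y))
    have h6 : (f x - f y) ^ 2 * ((1 / (f x - f y)) ^ 2 * finEnergy c f) = finEnergy c f := by
      field_simp
    rw [div_le_div_iff₀ hEf hEg]
    linarith [h5, h6]

lemma energy_diff_bound {c d : V → V → ℝ} {f : V → ℝ} (hf : ∀ z, f z ∈ Set.Icc (0:ℝ) 1) :
    finEnergy d f - finEnergy c f ≤ (1/2) * ∑ a : V, ∑ b : V, |d a b - c a b| := by
  have key : ∀ a b : V, d a b * (f a - f b) ^ 2 - c a b * (f a - f b) ^ 2 ≤ |d a b - c a b| := by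
    intro a b
    obtain ⟨h0a, h1a⟩ := hf a
    obtain ⟨h0b, h1b⟩ := hf b
    have h1 : (f a - f b) ^ 2 ≤ 1 := by nlinarith
    have h2 : d a b * (f a - f b) ^ 2 - c a b * (f a - f b) ^ 2
        = (d a b - c a b) * (f a - f b) ^ 2 := by ring
    rw [h2]
    calc (d a b - c a b) * (f a - f b) ^ 2 ≤ |d a b - c a b| * (f a - f b) ^ 2 :=
          mul_le_mul_of_nonneg_right (le_abs_self _) (sq_nonneg _)
      _ ≤ |d a b - c a b| * 1 := mul_le_mul_of_nonneg_left h1 (abs_nonneg _)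
      _ = |d a b - c a b| := mul_one _
  unfold finEnergy
  have h3 : ∑ a : V, ∑ b : V, d a b * (f a - f b) ^ 2
      - ∑ a : V, ∑ b : V, c a b * (f a - f b) ^ 2
      ≤ ∑ a : V, ∑ b : V, |d a b - c a b| := by
    rw [← Finset.sum_sub_distrib]
    simp_rw [← Finset.sum_sub_distrib]
    exact Finset.sum_le_sum fun a _ => Finset.sum_le_sum fun b _ => key a b
  linarith

lemma resSet_congr {c c'' : V → V → ℝ} (h : ∀ f : V → ℝ, finEnergy c f = finEnergy c'' f)
    (x y : V) : resSet c x y = resSet c'' x y := by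
  unfold resSet
  ext t
  constructor
  · rintro ⟨f, h1, h2⟩
    exact ⟨f, h1, h2.trans (by rw [h f])⟩
  · rintro ⟨f, h1, h2⟩
    exact ⟨f, h1, h2.trans (by rw [h f])⟩

end Aux2

section Aux3

variable {V : Type*} [Fintype V]

lemma finB_add_left (c : V → V → ℝ) (v w g : V → ℝ) :
    finB c (v + w) g = finB c v g + finB c w g := by
  have h : (v + w : V → ℝ) = fun z => 1 * v z + 1 * w z := by
    funext z; simp
  rw [h, finB_left_lin]
  ring

lemma finB_smul_left (c : V → V → ℝ) (s : ℝ) (v g : V → ℝ) :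
    finB c (s • v) g = s * finB c v g := by
  have h : (s • v : V → ℝ) = fun z => s * v z + 0 * v z := by
    funext z; simp
  rw [h, finB_left_lin]
  ring

/-- The linear functional `v ↦ finB c v g`. -/
noncomputable def finBL (c : V → V → ℝ) (g : V → ℝ) : (V → ℝ) →ₗ[ℝ] ℝ where
  toFun v := finB c v g
  map_add' v w := finB_add_left c v w g
  map_smul' s v := by simp [finB_smul_left c s v g]

@[simp] lemma finBL_apply (c : V → V → ℝ) (g v : V → ℝ) : finBL c g v = finB c v g := rfl

/-- Existence of the harmonic representer of the functional `f ↦ f x − f p`. -/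
lemma exists_repr {c : V → V → ℝ} (hc : IsFinResistanceForm c) {x p : V} (hxp : x ≠ p) :
    ∃ u : V → ℝ, u p = 0 ∧ ∀ f : V → ℝ, finB c u f = f x - f p := by
  obtain ⟨g, hgx, hgp, _, hmin⟩ := exists_min hc.2.1 hxp
  have hgnc : ¬∃ a : ℝ, ∀ z, g z = a :=
    nonconst_of_ne (x := x) (y := p) (by rw [hgx, hgp]; norm_num)
  have hEg := finEnergy_pos hc hgnc
  -- Euler–Lagrange equations
  have hEL : ∀ h : V → ℝ, h x = 0 → h p = 0 → finB c g h = 0 := by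
    intro h hx0 hp0
    apply finB_eq_zero_of_min hc.2.1
    intro t
    apply hmin
    · show g x + t * h x = 1
      rw [hgx, hx0]; ring
    · show g p + t * h p = 0
      rw [hgp, hp0]; ring
  -- reproducing property of g
  have hrep : ∀ f : V → ℝ, finB c g f = (f x - f p) * finEnergy c g := by
    intro f
    have e1 : f = fun z => (f x - f p) * g z + 1 * ((fun w => f w - (f x - f p) * g w) z) := by
      funext z; ring
    have e2 : (fun w => f w - (f x - f p) * g w)
        = fun z => 1 * ((fun w => f w - (f x - f p) * g w - f p) z) + f p * ((fun _ => (1:ℝ)) z) := by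
      funext z; ring
    have hh : finB c g (fun w => f w - (f x - f p) * g w - f p) = 0 := by
      apply hEL
      · show f x - (f x - f p) * g x - f p = 0
        rw [hgx]; ring
      · show f p - (f x - f p) * g p - f p = 0
        rw [hgp]; ring
    calc finB c g f
        = finB c g (fun z => (f x - f p) * g z
            + 1 * ((fun w => f w - (f x - f p) * g w) z)) := by rw [← e1]
      _ = (f x - f p) * finB c g g + 1 * finB c g (fun w => f w - (f x - f p) * g w) := by
          rw [finB_right_lin]
      _ = (f x - f p) * finEnergy c g + 1 * finB c g (fun w => f w - (f x - f p) * g w) := by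
          rw [finB_self]
      _ = (f x - f p) * finEnergy c g := by
          rw [e2, finB_right_lin, hh, finB_const_right]
          ring
  refine ⟨fun z => (finEnergy c g)⁻¹ * g z, by show (finEnergy c g)⁻¹ * g p = 0; rw [hgp]; ring, ?_⟩
  intro f
  have h1 : (fun z => (finEnergy c g)⁻¹ * g z) = fun z => (finEnergy c g)⁻¹ * g z + 0 * g z := by
    funext z; ring
  rw [h1, finB_left_lin, hrep f]
  field_simp
  ring

/-- Any function reproducing `f ↦ f x − f y` has energy equal to the effective resistance. -/
lemma isLUB_repr {c : V → V → ℝ} (hc : IsFinResistanceForm c) {x y : V} (hxy : x ≠ y)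
    {v : V → ℝ} (hv : ∀ f : V → ℝ, finB c v f = f x - f y) :
    IsLUB (resSet c x y) (finEnergy c v) := by
  have hvnc : ¬∃ a : ℝ, ∀ z, v z = a := by
    rintro ⟨a, ha⟩
    have h1 := hv (ind x)
    have hveq : v = fun _ => a := funext ha
    rw [hveq, finB_const_left] at h1
    rw [ind_self, ind_ne (Ne.symm hxy)] at h1
    norm_num at h1
  have hEv := finEnergy_pos hc hvnc
  have hvv : finEnergy c v = v x - v y := by rw [← finB_self]; exact hv v
  refine IsGreatest.isLUB ⟨⟨v, hvnc, ?_⟩, ?_⟩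
  · rw [← hvv, pow_two, mul_div_assoc, div_self hEv.ne', mul_one]
  · rintro t ⟨f, hnc, rfl⟩
    have hEf := finEnergy_pos hc hnc
    have hCS := finB_sq_le hc.2.1 v f
    rw [hv f] at hCS
    rw [div_le_iff₀ hEf]
    exact hCS

/-- The energy form is uniquely determined by the effective resistance. -/
lemma energy_unique (hV : 2 ≤ Fintype.card V)
    {c c' : V → V → ℝ} (hc : IsFinResistanceForm c) (hc' : IsFinResistanceForm c')
    {Rl : V → V → ℝ} (hzero : ∀ x, Rl x x = 0)
    (hR : IsEffectiveResistance c Rl) (hR' : IsEffectiveResistance c' Rl) :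
    ∀ f : V → ℝ, finEnergy c f = finEnergy c' f := by
  classical
  have hne : Nonempty V := Fintype.card_pos_iff.mp (by omega)
  obtain ⟨p⟩ := hne
  -- representers for both forms
  have hrepc : ∀ q : {q : V // q ≠ p}, ∃ u : V → ℝ, u p = 0 ∧ ∀ f, finB c u f = f q.1 - f p :=
    fun q => exists_repr hc q.2
  have hrepc' : ∀ q : {q : V // q ≠ p}, ∃ u : V → ℝ, u p = 0 ∧ ∀ f, finB c' u f = f q.1 - f p :=
    fun q => exists_repr hc' q.2
  choose u hu0 hurep using hrepc
  choose u' hu'0 hu'rep using hrepc'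
  -- values of the representers are determined by Rl
  have hval : ∀ (d : V → V → ℝ), IsFinResistanceForm d → IsEffectiveResistance d Rl →
      ∀ (w : {q : V // q ≠ p} → V → ℝ), (∀ q, w q p = 0) →
      (∀ q f, finB d (w q) f = f q.1 - f p) →
      ∀ q z, w q z = if z = p then 0 else (Rl q.1 p + Rl z p - Rl q.1 z) / 2 := by
    intro d hd hRd w hw0 hwrep q z
    have hEq : finEnergy d (w q) = Rl q.1 p :=
      (isLUB_repr hd q.2 (hwrep q)).unique (hRd q.1 p q.2)
    have hEvalq : finEnergy d (w q) = w q q.1 := by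
      rw [← finB_self, hwrep q (w q), hw0 q]; ring
    by_cases hz : z = p
    · rw [if_pos hz, hz, hw0 q]
    · rw [if_neg hz]
      by_cases hzq : z = q.1
      · rw [hzq, hzero q.1, ← hEvalq, hEq]
        ring
      · -- z ≠ p, z ≠ q.1
        set r : {q : V // q ≠ p} := ⟨z, hz⟩ with hrdef
        have hEr : finEnergy d (w r) = Rl z p :=
          (isLUB_repr hd hz (hwrep r)).unique (hRd z p hz)
        have hEvalr : finEnergy d (w r) = w r z := by
          rw [← finB_self, hwrep r (w r), hw0 r]; ring
        have hq1z : q.1 ≠ z := fun h => hzq h.symm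
        have hsub : ∀ f : V → ℝ, finB d (fun t => 1 * w q t + (-1) * w r t) f = f q.1 - f z := by
          intro f
          rw [finB_left_lin, hwrep q f, hwrep r f]
          ring
        have hvv : finEnergy d (fun t => 1 * w q t + (-1) * w r t) = Rl q.1 z :=
          (isLUB_repr hd hq1z hsub).unique (hRd q.1 z hq1z)
        have hexp : finEnergy d (fun t => 1 * w q t + (-1) * w r t)
            = (w q q.1 - w r q.1) - (w q z - w r z) := by
          rw [← finB_self, hsub]
          ring
        -- symmetry of the Green function
        have hsym : w r q.1 = w q z := by
          have a1 : finB d (w q) (w r) = w r q.1 - w r p := hwrep q (w r)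
          have a2 : finB d (w r) (w q) = w q z - w q p := hwrep r (w q)
          rw [hw0 q] at a2
          rw [hw0 r] at a1
          rw [finB_comm] at a1
          rw [a1] at a2
          linarith [a2]
        have hwqq : w q q.1 = Rl q.1 p := by rw [← hEvalq, hEq]
        have hwrz : w r z = Rl z p := by rw [← hEvalr, hEr]
        rw [hexp, hsym, hwqq, hwrz] at hvv
        linarith [hvv]
  have huval := hval c hc hR u hu0 hurep
  have hu'val := hval c' hc' hR' u' hu'0 hu'rep
  have hueq : ∀ q, u q = u' q := by
    intro q
    funext z
    rw [huval q z, hu'val q z]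
  -- the family {1} ∪ {u q} spans l(V)
  set b : Option {q : V // q ≠ p} → (V → ℝ) := fun o =>
    match o with
    | none => fun _ => 1
    | some q => u q
    with hbdef
  have hli : LinearIndependent ℝ b := by
    rw [Fintype.linearIndependent_iff]
    intro gcoef hsum
    have hnone : gcoef none = 0 := by
      have hp := congrFun hsum p
      rw [Finset.sum_apply] at hp
      simp only [Pi.smul_apply, smul_eq_mul] at hp
      rw [Fintype.sum_option] at hp
      simp only [hbdef] at hp
      simp only [Pi.zero_apply] at hp
      have : ∀ q : {q : V // q ≠ p}, gcoef (some q) * u q p = 0 := by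
        intro q; rw [hu0 q]; ring
      rw [Finset.sum_congr rfl (fun q _ => this q)] at hp
      simp at hp
      linarith [hp]
    intro i
    match i with
    | none => exact hnone
    | some q =>
      have happ := congrArg (finBL c (ind q.1)) hsum
      rw [map_sum, map_zero] at happ
      simp only [map_smul, smul_eq_mul, finBL_apply] at happ
      rw [Fintype.sum_option] at happ
      have hbnone : finB c (b none) (ind q.1) = 0 := by
        simp only [hbdef]
        exact finB_const_left c (ind q.1) 1
      have hbsome : ∀ q' : {q : V // q ≠ p},
          finB c (b (some q')) (ind q.1) = if q' = q then 1 else 0 := by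
        intro q'
        simp only [hbdef]
        rw [hurep q' (ind q.1)]
        rw [ind_ne (Ne.symm q.2)]
        by_cases h : q' = q
        · rw [if_pos h, h, ind_self]; ring
        · rw [if_neg h, ind_ne (fun hh => h (Subtype.ext hh))]; ring
      rw [hbnone] at happ
      rw [Finset.sum_congr rfl (fun q' _ => by rw [hbsome q'])] at happ
      simp only [mul_ite, mul_one, mul_zero] at happ
      rw [Finset.sum_ite_eq' Finset.univ q (fun q' => gcoef (some q'))] at happ
      simp at happ
      linarith [happ]
  have hcard : Fintype.card (Option {q : V // q ≠ p}) = Module.finrank ℝ (V → ℝ) := by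
    rw [Module.finrank_pi, Fintype.card_option]
    have h1 : Fintype.card {q : V // q ≠ p} = Fintype.card V - 1 := by
      rw [Fintype.card_subtype_compl (fun q : V => q = p), Fintype.card_subtype_eq]
    rw [h1]
    omega
  have hspan := hli.span_eq_top_of_card_eq_finrank hcard
  -- conclude
  intro f
  have hzero' : finBL c f - finBL c' f = 0 := by
    apply LinearMap.ext_on hspan
    rintro v ⟨i, rfl⟩
    match i with
    | none =>
      simp only [LinearMap.sub_apply, finBL_apply, LinearMap.zero_apply, hbdef]
      rw [finB_const_left, finB_const_left]
      ring
    | some q =>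
      simp only [LinearMap.sub_apply, finBL_apply, LinearMap.zero_apply, hbdef]
      rw [hurep q f]
      rw [hueq q, hu'rep q f]
      ring
  have := congrFun (congrArg DFunLike.coe hzero') f
  simp only [LinearMap.sub_apply, finBL_apply, LinearMap.zero_apply] at this
  rw [← finB_self, ← finB_self]
  linarith [this]

end Aux3

section Aux4

variable {V : Type*} [Fintype V]

/-- A pointwise limit of resistance forms along a subsequence, whose effective
resistances converge to `Rlim`, is a resistance form with effective resistance `Rlim`. -/
lemma limit_form (hV : 2 ≤ Fintype.card V)
    {c : ℕ → V → V → ℝ} (hc : ∀ n, IsFinResistanceForm (c n))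
    {R : ℕ → V → V → ℝ} (hR : ∀ n, IsEffectiveResistance (c n) (R n))
    {Rlim : V → V → ℝ} (hpos : ∀ x y, x ≠ y → 0 < Rlim x y)
    (hconv : ∀ x y, Filter.Tendsto (fun n => R n x y) Filter.atTop (𝓝 (Rlim x y)))
    {φ : ℕ → ℕ} (hφ : Filter.Tendsto φ Filter.atTop Filter.atTop)
    {d : V → V → ℝ}
    (hd : ∀ x y, Filter.Tendsto (fun k => c (φ k) x y) Filter.atTop (𝓝 (d x y))) :
    IsFinResistanceForm d ∧ IsEffectiveResistance d Rlim ∧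
      ∀ f : V → ℝ, Filter.Tendsto (fun k => finEnergy (c (φ k)) f) Filter.atTop
        (𝓝 (finEnergy d f)) := by
  have hVne : Nonempty V := Fintype.card_pos_iff.mp (by omega)
  have hdsym : ∀ x y, d x y = d y x := by
    intro x y
    refine tendsto_nhds_unique (hd x y) (Filter.Tendsto.congr (fun k => (hc (φ k)).1 y x) ?_)
    exact hd y x
  have hdnn : ∀ x y, 0 ≤ d x y := fun x y =>
    ge_of_tendsto' (hd x y) (fun k => (hc (φ k)).2.1 x y)
  have hEconv : ∀ f : V → ℝ, Filter.Tendsto (fun k => finEnergy (c (φ k)) f) Filter.atTop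
      (𝓝 (finEnergy d f)) := by
    intro f
    unfold finEnergy
    apply Filter.Tendsto.const_mul
    apply tendsto_finset_sum
    intro a _
    apply tendsto_finset_sum
    intro b _
    exact (hd a b).mul_const _
  have hRφ : ∀ x y, Filter.Tendsto (fun k => R (φ k) x y) Filter.atTop (𝓝 (Rlim x y)) :=
    fun x y => (hconv x y).comp hφ
  have hkey : ∀ (f : V → ℝ) (x y : V), x ≠ y → (¬∃ a : ℝ, ∀ z, f z = a) →
      (f x - f y) ^ 2 ≤ Rlim x y * finEnergy d f := by
    intro f x y hxy hnc
    have h1 : ∀ k, (f x - f y) ^ 2 ≤ R (φ k) x y * finEnergy (c (φ k)) f :=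
      fun k => sq_le_R_mul (hc (φ k)) (hR (φ k) x y hxy) hnc
    exact ge_of_tendsto' ((hRφ x y).mul (hEconv f)) h1
  have hdform : IsFinResistanceForm d := by
    refine ⟨hdsym, hdnn, fun f => ⟨?_, ?_⟩⟩
    · intro hE0
      by_contra hnc
      obtain ⟨x, y, hne⟩ : ∃ x y : V, f x ≠ f y := by
        by_contra h
        push_neg at h
        exact hnc ⟨f (Classical.arbitrary V), fun z => h z (Classical.arbitrary V)⟩
      have hxy : x ≠ y := fun h => hne (h ▸ rfl)
      have h1 := hkey f x y hxy hnc
      rw [hE0, mul_zero] at h1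
      have h2 : (0:ℝ) < (f x - f y) ^ 2 :=
        lt_of_le_of_ne (sq_nonneg _) (Ne.symm (pow_ne_zero _ (sub_ne_zero.mpr hne)))
      linarith
    · rintro ⟨a, ha⟩
      have hfa : f = fun _ => a := funext ha
      rw [hfa, finEnergy_const]
  refine ⟨hdform, ?_, hEconv⟩
  intro x y hxy
  obtain ⟨g, hgx, hgy, hgIcc, hgmin⟩ := exists_min hdnn hxy
  have hgnc : ¬∃ a : ℝ, ∀ z, g z = a :=
    nonconst_of_ne (x := x) (y := y) (by rw [hgx, hgy]; norm_num)
  have hEg := finEnergy_pos hdform hgnc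
  have hlub : IsLUB (resSet d x y) (1 / finEnergy d g) :=
    isLUB_inv_min hdform hxy hgx hgy hgmin
  have h1 : 1 / finEnergy d g ≤ Rlim x y := by
    have hk := hkey g x y hxy hgnc
    rw [hgx, hgy] at hk
    norm_num at hk
    rw [div_le_iff₀ hEg]
    linarith [hk]
  have h2 : Rlim x y ≤ 1 / finEnergy d g := by
    have hbound : ∀ k, finEnergy d g
        ≤ 1 / R (φ k) x y + (1/2) * ∑ a : V, ∑ b : V, |d a b - c (φ k) a b| := by
      intro k
      obtain ⟨gk, hkx, hky, hkIcc, hkmin⟩ := exists_min (hc (φ k)).2.1 hxy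
      have hknc : ¬∃ a : ℝ, ∀ z, gk z = a :=
        nonconst_of_ne (x := x) (y := y) (by rw [hkx, hky]; norm_num)
      have hEk := finEnergy_pos (hc (φ k)) hknc
      have hlubk : IsLUB (resSet (c (φ k)) x y) (1 / finEnergy (c (φ k)) gk) :=
        isLUB_inv_min (hc (φ k)) hxy hkx hky hkmin
      have hRk : R (φ k) x y = 1 / finEnergy (c (φ k)) gk :=
        (hR (φ k) x y hxy).unique hlubk
      have hEkval : finEnergy (c (φ k)) gk = 1 / R (φ k) x y := by
        rw [hRk]
        field_simp
      have hdiff := energy_diff_bound (c := c (φ k)) (d := d) hkIcc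
      have hmono := hgmin gk hkx hky
      linarith
    have hlim : Filter.Tendsto
        (fun k => 1 / R (φ k) x y + (1/2) * ∑ a : V, ∑ b : V, |d a b - c (φ k) a b|)
        Filter.atTop (𝓝 (1 / Rlim x y)) := by
      have l1 : Filter.Tendsto (fun k => 1 / R (φ k) x y) Filter.atTop (𝓝 (1 / Rlim x y)) :=
        Filter.Tendsto.div tendsto_const_nhds (hRφ x y) (hpos x y hxy).ne'
      have l2 : Filter.Tendsto
          (fun k => (1/2 : ℝ) * ∑ a : V, ∑ b : V, |d a b - c (φ k) a b|)
          Filter.atTop (𝓝 0) := by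
        have habs : ∀ a b : V, Filter.Tendsto (fun k => |d a b - c (φ k) a b|)
            Filter.atTop (𝓝 0) := by
          intro a b
          have := (Filter.Tendsto.sub (tendsto_const_nhds (x := d a b)) (hd a b)).abs
          simpa using this
        have hsum := tendsto_finset_sum (Finset.univ : Finset V)
          (fun a _ => tendsto_finset_sum (Finset.univ : Finset V) (fun b _ => habs a b))
        have := hsum.const_mul (1/2 : ℝ)
        simpa using this
      have := l1.add l2
      simpa using this
    have hfin : finEnergy d g ≤ 1 / Rlim x y := ge_of_tendsto' hlim hbound
    rw [le_div_iff₀ hEg]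
    have hp := hpos x y hxy
    have h3 : Rlim x y * finEnergy d g ≤ Rlim x y * (1 / Rlim x y) :=
      mul_le_mul_of_nonneg_left hfin hp.le
    rw [mul_one_div_cancel hp.ne'] at h3
    exact h3
  have heq : 1 / finEnergy d g = Rlim x y := le_antisymm h1 h2
  rw [← heq]
  exact hlub

end Aux4

/-- If the effective resistances `R n` of a sequence of
resistance forms on a finite set `V` (`#V ≥ 2`) converge pointwise to a metric
`R` on `V`, then `R` is the effective resistance of some resistance form `E`
on `V`, and the energies converge: `E_n(f) → E(f)` for every `f ∈ l(V)`. -/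
theorem stmt5 {V : Type*} [Fintype V] (hV : 2 ≤ Fintype.card V)
    (c : ℕ → V → V → ℝ) (hc : ∀ n, IsFinResistanceForm (c n))
    (R : ℕ → V → V → ℝ) (hR : ∀ n, IsEffectiveResistance (c n) (R n))
    (Rlim : V → V → ℝ)
    (hsymm : ∀ x y, Rlim x y = Rlim y x)
    (hzero : ∀ x y, Rlim x y = 0 ↔ x = y)
    (hpos : ∀ x y, x ≠ y → 0 < Rlim x y)
    (htri : ∀ x y z, Rlim x z ≤ Rlim x y + Rlim y z)
    (hconv : ∀ x y, Tendsto (fun n => R n x y) atTop (𝓝 (Rlim x y))) :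
    ∃ clim : V → V → ℝ, IsFinResistanceForm clim ∧
      IsEffectiveResistance clim Rlim ∧
      ∀ f : V → ℝ,
        Tendsto (fun n => finEnergy (c n) f) atTop (𝓝 (finEnergy clim f)) := by
  classical
  -- replace the conductances by their zero-diagonal versions
  set c' : ℕ → V → V → ℝ := fun n x y => if x = y then 0 else c n x y with hc'def
  have hE' : ∀ n (f : V → ℝ), finEnergy (c' n) f = finEnergy (c n) f := by
    intro n f
    unfold finEnergy
    congr 1
    refine Finset.sum_congr rfl fun a _ => Finset.sum_congr rfl fun b _ => ?_
    by_cases hab : a = b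
    · subst hab
      simp [hc'def]
    · simp [hc'def, hab]
  have hcform' : ∀ n, IsFinResistanceForm (c' n) := by
    intro n
    refine ⟨?_, ?_, fun f => by rw [hE']; exact (hc n).2.2 f⟩
    · intro x y
      by_cases h : x = y
      · simp [hc'def, h]
      · simp only [hc'def]
        rw [if_neg h, if_neg (fun hh => h hh.symm)]
        exact (hc n).1 x y
    · intro x y
      simp only [hc'def]
      split_ifs
      · exact le_refl 0
      · exact (hc n).2.1 x y
  have hR' : ∀ n, IsEffectiveResistance (c' n) (R n) := by
    intro n x y hxy
    have h := hR n x y hxy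
    have heq : resSet (c' n) x y = resSet (c n) x y := resSet_congr (hE' n) x y
    show IsLUB (resSet (c' n) x y) (R n x y)
    rw [heq]
    exact h
  -- uniform bound on the conductances
  have hbdd : ∀ x y : V, ∃ K : ℝ, ∀ n, c' n x y ≤ K := by
    intro x y
    by_cases hxy : x = y
    · exact ⟨0, fun n => le_of_eq (by simp [hc'def, hxy])⟩
    · have h1 : ∀ n, c' n x y ≤ 1 / R n x y :=
        fun n => cond_le (hcform' n) hxy (hR' n x y hxy)
      have h2 : Tendsto (fun n => 1 / R n x y) atTop (𝓝 (1 / Rlim x y)) :=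
        Filter.Tendsto.div tendsto_const_nhds (hconv x y) (hpos x y hxy).ne'
      obtain ⟨K, hK⟩ := h2.bddAbove_range
      exact ⟨K, fun n => le_trans (h1 n) (hK (Set.mem_range_self n))⟩
  choose K hK using hbdd
  -- compactness
  set S : Set (V → V → ℝ) := Set.univ.pi fun x => Set.univ.pi fun y => Set.Icc 0 (K x y)
    with hSdef
  have hScomp : IsCompact S :=
    isCompact_univ_pi fun x => isCompact_univ_pi fun y => isCompact_Icc
  have hc'nn : ∀ n x y, 0 ≤ c' n x y := fun n => (hcform' n).2.1
  have hmemS : ∀ n, c' n ∈ S := by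
    intro n
    simp only [hSdef, Set.mem_pi, Set.mem_univ, forall_true_left, Set.mem_Icc]
    intro x y
    exact ⟨hc'nn n x y, hK x y n⟩
  -- pointwise limit extraction
  have hpt : ∀ (ψ : ℕ → ℕ) (d : V → V → ℝ),
      Tendsto ((fun n => c' n) ∘ ψ) atTop (𝓝 d) →
      ∀ x y, Tendsto (fun k => c' (ψ k) x y) atTop (𝓝 (d x y)) := by
    intro ψ d hlim x y
    have t1 : Tendsto (fun k => c' (ψ k) x) atTop (𝓝 (d x)) :=
      ((continuous_apply x).tendsto d).comp hlim
    exact ((continuous_apply y).tendsto (d x)).comp t1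
  obtain ⟨d, hdS, ψ, hψmono, hdlim⟩ := hScomp.tendsto_subseq hmemS
  have hdpt := hpt ψ d hdlim
  obtain ⟨hdform, hdres, hdE⟩ :=
    limit_form hV hcform' hR' hpos hconv (hψmono.tendsto_atTop) hdpt
  refine ⟨d, hdform, hdres, ?_⟩
  intro f
  apply Filter.tendsto_of_subseq_tendsto
  intro ns hns
  obtain ⟨d2, hd2S, ms, hmsmono, hd2lim⟩ := hScomp.tendsto_subseq (fun k => hmemS (ns k))
  have hcomp : Tendsto (fun k => ns (ms k)) atTop atTop :=
    hns.comp hmsmono.tendsto_atTop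
  have hd2pt := hpt (fun k => ns (ms k)) d2 hd2lim
  obtain ⟨hd2form, hd2res, hd2E⟩ :=
    limit_form hV hcform' hR' hpos hconv hcomp hd2pt
  have huniq : finEnergy d2 f = finEnergy d f :=
    energy_unique hV hd2form hdform (fun x => (hzero x x).mpr rfl) hd2res hdres f
  refine ⟨ms, ?_⟩
  have h1 := hd2E f
  rw [huniq] at h1
  refine h1.congr fun k => ?_
  exact hE' (ns (ms k)) f
end

section
/- Assume setting (C1). For each n ≥ 1 let (E_n,F_n) be a resistance form on A_n with F_n ⊆ C(A_n), and let (E,F) be a resistance form on A with F ⊆ C(A). If (E_n,F_n) Γ-converges to (E,F) on C(B) and each (E_n,F_n) is local, then (E,F) is local. -/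
open Filter Topology

/-- A resistance form `(E, F)` on a set `X` in the sense of Kigami.
`dom` models the domain `F ⊆ l(X)` and `en` models the bilinear form `E`
(its values outside `dom × dom` are irrelevant). -/
structure ResistanceForm (X : Type*) where
  dom : Set (X → ℝ)
  en : (X → ℝ) → (X → ℝ) → ℝ
  dom_const : ∀ a : ℝ, (fun _ => a) ∈ dom
  dom_add : ∀ f g, f ∈ dom → g ∈ dom → f + g ∈ dom
  dom_smul : ∀ (a : ℝ) f, f ∈ dom → a • f ∈ dom
  symm : ∀ f g, en f g = en g f
  add_left : ∀ f g h, f ∈ dom → g ∈ dom → h ∈ dom →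
    en (f + g) h = en f h + en g h
  smul_left : ∀ (a : ℝ) f g, f ∈ dom → g ∈ dom → en (a • f) g = a * en f g
  nonneg : ∀ f, f ∈ dom → 0 ≤ en f f
  /-- (RF1): `E(f,f) = 0` iff `f` is constant. -/
  en_eq_zero_iff : ∀ f, f ∈ dom → (en f f = 0 ↔ ∃ a : ℝ, ∀ x, f x = a)
  /-- (RF2): the quotient of `dom` by constants is complete in the `E`-norm. -/
  complete : ∀ u : ℕ → X → ℝ, (∀ n, u n ∈ dom) →
    (∀ ε > (0:ℝ), ∃ N, ∀ m ≥ N, ∀ n ≥ N, en (u m - u n) (u m - u n) < ε) →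
    ∃ v ∈ dom, Tendsto (fun n => en (u n - v) (u n - v)) atTop (𝓝 0)
  /-- (RF3): finite sets admit arbitrary extensions. -/
  exten : ∀ (V : Finset X) (u : X → ℝ), ∃ f ∈ dom, ∀ x ∈ V, f x = u x
  /-- (RF4): the effective resistance between any two points is finite. -/
  resist_fin : ∀ x y : X, ∃ C : ℝ, ∀ f ∈ dom, (f x - f y) ^ 2 ≤ C * en f f
  /-- (RF5): the Markov property. -/
  markov : ∀ f ∈ dom, (fun x => min (max (f x) 0) 1) ∈ dom ∧
    en (fun x => min (max (f x) 0) 1) (fun x => min (max (f x) 0) 1) ≤ en f f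

open Classical in
/-- The quadratic form of a resistance form, extended by `+∞` off its domain. -/
noncomputable def exEn {X : Type*} (RF : ResistanceForm X) (f : X → ℝ) : EReal :=
  if f ∈ RF.dom then ((RF.en f f : ℝ) : EReal) else ⊤

/-- A resistance form on a topological space is local if `E(f,g) = 0` whenever
`f, g` in its domain have disjoint supports. -/
def IsLocalRF {X : Type*} [TopologicalSpace X] (RF : ResistanceForm X) : Prop :=
  ∀ f ∈ RF.dom, ∀ g ∈ RF.dom, Disjoint (tsupport f) (tsupport g) → RF.en f g = 0


/-!
Locality of `E` reduces to `E(f, g) = 0` for nonnegative `f`, `g` with disjoint supports. Extend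
them to nonnegative `F`, `G` on `B` with disjoint supports and take recovery sequences for `F` and
`G`. Shifting these down by their uniform error and clamping them pushes their supports inside
those of `F` and `G` without raising the energies (Markov property). Locality of `E_n` then gives
`E_n(u_n + σ v_n) = E_n(u_n) + σ² E_n(v_n)`, so the Γ-liminf inequality yields
`E(f + σ g) ≤ E(f) + σ² E(g)`, i.e. `2σ E(f, g) ≤ 0` for `σ = ±1`.
-/
namespace ResistanceForm

variable {X : Type*} (RF : ResistanceForm X) {f g h : X → ℝ}

lemma dom_sub (hf : f ∈ RF.dom) (hg : g ∈ RF.dom) : f - g ∈ RF.dom := by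
  simpa [sub_eq_add_neg] using RF.dom_add _ _ hf (RF.dom_smul (-1) g hg)

lemma en_add_right (hf : f ∈ RF.dom) (hg : g ∈ RF.dom) (hh : h ∈ RF.dom) :
    RF.en f (g + h) = RF.en f g + RF.en f h := by
  rw [RF.symm, RF.add_left g h f hg hh hf, RF.symm g, RF.symm h]

lemma en_smul_right (a : ℝ) (hf : f ∈ RF.dom) (hg : g ∈ RF.dom) :
    RF.en f (a • g) = a * RF.en f g := by
  rw [RF.symm, RF.smul_left a g f hg hf, RF.symm g]

lemma en_add_smul_self (a : ℝ) (hf : f ∈ RF.dom) (hg : g ∈ RF.dom) :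
    RF.en (f + a • g) (f + a • g) = RF.en f f + 2 * a * RF.en f g + a ^ 2 * RF.en g g := by
  have hag := RF.dom_smul a g hg
  rw [RF.add_left f _ _ hf hag (RF.dom_add _ _ hf hag), RF.en_add_right hf hf hag,
    RF.en_add_right hag hf hag, RF.smul_left a g f hg hf, RF.smul_left a g _ hg hag,
    RF.en_smul_right a hf hg, RF.en_smul_right a hg hg, RF.symm g f]
  ring

lemma en_smul_self (a : ℝ) (hf : f ∈ RF.dom) : RF.en (a • f) (a • f) = a ^ 2 * RF.en f f := by
  rw [RF.smul_left a f _ hf (RF.dom_smul a f hf), RF.en_smul_right a hf hf]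
  ring

lemma en_sub_left (hf : f ∈ RF.dom) (hg : g ∈ RF.dom) (hh : h ∈ RF.dom) :
    RF.en (f - g) h = RF.en f h - RF.en g h := by
  rw [sub_eq_add_neg, ← neg_one_smul ℝ g, RF.add_left f _ h hf (RF.dom_smul _ g hg) hh,
    RF.smul_left _ g h hg hh]
  ring

lemma en_sub_right (hf : f ∈ RF.dom) (hg : g ∈ RF.dom) (hh : h ∈ RF.dom) :
    RF.en f (g - h) = RF.en f g - RF.en f h := by
  rw [RF.symm, RF.en_sub_left hg hh hf, RF.symm g, RF.symm h]

/-- Constants are `E`-orthogonal to everything: `t ↦ E(c + t f)` is a nonnegative quadratic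
vanishing at `t = 0`. -/
lemma en_const_left (c : ℝ) (hf : f ∈ RF.dom) : RF.en (fun _ => c) f = 0 := by
  have hc := RF.dom_const c
  have hcc : RF.en (fun _ => c) (fun _ => c) = 0 :=
    (RF.en_eq_zero_iff _ hc).2 ⟨c, fun _ => rfl⟩
  have hdiscr : discrim (RF.en f f) (2 * RF.en (fun _ => c) f) 0 ≤ 0 :=
    discrim_le_zero fun t => by
      have := RF.nonneg _ (RF.dom_add _ _ hc (RF.dom_smul t f hf))
      rw [RF.en_add_smul_self t hc hf, hcc] at this
      linarith
  rw [discrim] at hdiscr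
  nlinarith [sq_nonneg (RF.en (fun _ => c) f)]

lemma en_const_right (c : ℝ) (hf : f ∈ RF.dom) : RF.en f (fun _ => c) = 0 := by
  rw [RF.symm, RF.en_const_left c hf]

lemma en_sub_const_self (c : ℝ) (hf : f ∈ RF.dom) :
    RF.en (f - fun _ => c) (f - fun _ => c) = RF.en f f := by
  have h1 := RF.dom_const 1
  have hfc : (f - fun _ => c) = f + (-c) • fun _ => (1 : ℝ) := by
    ext x; simp [sub_eq_add_neg]
  rw [hfc, RF.en_add_smul_self _ hf h1, RF.en_const_right 1 hf, RF.en_const_left 1 h1]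
  ring

lemma markov_clamp (hf : f ∈ RF.dom) (c : ℝ) {M : ℝ} (hM : 0 < M) :
    (fun x => min (max (f x - c) 0) M) ∈ RF.dom ∧
      RF.en (fun x => min (max (f x - c) 0) M) (fun x => min (max (f x - c) 0) M)
        ≤ RF.en f f := by
  have hfc := RF.dom_sub hf (RF.dom_const c)
  obtain ⟨hθ, hθE⟩ := RF.markov _ (RF.dom_smul M⁻¹ _ hfc)
  have hclamp : (fun x => min (max (f x - c) 0) M) =
      M • fun x => min (max ((M⁻¹ • (f - fun _ => c) : X → ℝ) x) 0) 1 := by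
    ext x
    simp only [Pi.smul_apply, Pi.sub_apply, smul_eq_mul]
    rw [mul_min_of_nonneg _ _ hM.le, mul_max_of_nonneg _ _ hM.le, mul_inv_cancel_left₀ hM.ne',
      mul_zero, mul_one]
  rw [hclamp, RF.en_smul_self M hθ]
  refine ⟨RF.dom_smul M _ hθ, ?_⟩
  calc M ^ 2 * _ ≤ M ^ 2 * RF.en (M⁻¹ • (f - fun _ => c)) (M⁻¹ • (f - fun _ => c)) := by
        gcongr
    _ = RF.en f f := by
        rw [RF.en_smul_self _ hfc, RF.en_sub_const_self c hf, ← mul_assoc, ← mul_pow,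
          mul_inv_cancel₀ hM.ne', one_pow, one_mul]

lemma posPart_mem_dom (hf : f ∈ RF.dom) (hbdd : BddAbove (Set.range f)) : f⁺ ∈ RF.dom := by
  obtain ⟨b, hb⟩ := hbdd
  have hclamp : f⁺ = fun x => min (max (f x - 0) 0) (max b 1) := by
    ext x
    rw [sub_zero, min_eq_left (max_le_max (hb ⟨x, rfl⟩) zero_le_one)]
    rfl
  exact hclamp ▸ (RF.markov_clamp hf 0 (by positivity)).1

lemma isLocalRF_of_nonneg [TopologicalSpace X] (hbdd : ∀ f ∈ RF.dom, BddAbove (Set.range f))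
    (h : ∀ f ∈ RF.dom, ∀ g ∈ RF.dom, 0 ≤ f → 0 ≤ g →
      Disjoint (tsupport f) (tsupport g) → RF.en f g = 0) :
    IsLocalRF RF := by
  have hparts : ∀ φ ∈ RF.dom, (φ⁺ ∈ RF.dom ∧ 0 ≤ φ⁺ ∧ tsupport φ⁺ ⊆ tsupport φ) ∧
      (φ⁻ ∈ RF.dom ∧ 0 ≤ φ⁻ ∧ tsupport φ⁻ ⊆ tsupport φ) := by
    intro φ hφ
    have hnφ : -φ ∈ RF.dom := by simpa using RF.dom_smul (-1) φ hφ
    refine ⟨⟨RF.posPart_mem_dom hφ (hbdd φ hφ), posPart_nonneg φ,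
      tsupport_comp_subset (g := fun a : ℝ => a⁺) (by simp) φ⟩,
      ⟨?_, negPart_nonneg φ, tsupport_comp_subset (g := fun a : ℝ => a⁻) (by simp) φ⟩⟩
    rw [← posPart_neg]
    exact RF.posPart_mem_dom hnφ (hbdd _ hnφ)
  intro f hf g hg hfg
  obtain ⟨⟨hfp, hfp0, hfps⟩, hfn, hfn0, hfns⟩ := hparts f hf
  obtain ⟨⟨hgp, hgp0, hgps⟩, hgn, hgn0, hgns⟩ := hparts g hg
  rw [← posPart_sub_negPart f, ← posPart_sub_negPart g,
    RF.en_sub_left hfp hfn (RF.dom_sub hgp hgn), RF.en_sub_right hfp hgp hgn,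
    RF.en_sub_right hfn hgp hgn, h _ hfp _ hgp hfp0 hgp0 (hfg.mono hfps hgps),
    h _ hfp _ hgn hfp0 hgn0 (hfg.mono hfps hgns), h _ hfn _ hgp hfn0 hgp0 (hfg.mono hfns hgps),
    h _ hfn _ hgn hfn0 hgn0 (hfg.mono hfns hgns), sub_self]

end ResistanceForm

lemma exEn_of_mem {X : Type*} {RF : ResistanceForm X} {f : X → ℝ} (hf : f ∈ RF.dom) :
    exEn RF f = RF.en f f :=
  if_pos hf

lemma exEn_lt_coe_iff {X : Type*} {RF : ResistanceForm X} {f : X → ℝ} {r : ℝ} :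
    exEn RF f < r ↔ f ∈ RF.dom ∧ RF.en f f < r := by
  unfold exEn
  split_ifs with hf <;> simp [hf]

section Extension

variable {B : Type*} [MetricSpace B] {S : Set B}

/-- Tietze extension, made nonnegative by `|·|` and localised by a thickened indicator. -/
lemma exists_nonneg_extension_tsupport_subset (hS : IsClosed S) {f : S → ℝ}
    (hf : Continuous f) (hf0 : 0 ≤ f) {δ : ℝ} (hδ : 0 < δ) :
    ∃ F : B → ℝ, Continuous F ∧ 0 ≤ F ∧ (∀ x : S, F x = f x) ∧
      tsupport F ⊆ Metric.cthickening δ (Subtype.val '' tsupport f) := by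
  obtain ⟨F₀, hF₀⟩ := ContinuousMap.exists_restrict_eq hS ⟨f, hf⟩
  have hF₀f : ∀ x : S, F₀ x = f x := fun x => DFunLike.congr_fun hF₀ x
  set K := Subtype.val '' tsupport f
  refine ⟨fun b => |F₀ b| * thickenedIndicator hδ K b, by fun_prop, fun b => by positivity,
    ?_, ?_⟩
  · intro x
    by_cases hx : x ∈ tsupport f
    · simp only
      rw [thickenedIndicator_one_of_mem_closure hδ K (subset_closure ⟨x, hx, rfl⟩), hF₀f,
        abs_of_nonneg (hf0 x)]
      simp
    · simp [hF₀f, image_eq_zero_of_notMem_tsupport hx]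
  · refine (closure_mono fun b hb => ?_).trans (Metric.closure_thickening_subset_cthickening δ K)
    by_contra hbK
    exact hb (by simp [thickenedIndicator_zero hδ K hbK])

lemma exists_nonneg_extensions_disjoint_tsupport (hS : IsCompact S) {f g : S → ℝ}
    (hf : Continuous f) (hg : Continuous g) (hf0 : 0 ≤ f) (hg0 : 0 ≤ g)
    (hfg : Disjoint (tsupport f) (tsupport g)) :
    ∃ F G : B → ℝ, Continuous F ∧ Continuous G ∧ 0 ≤ F ∧ 0 ≤ G ∧
      (∀ x : S, F x = f x) ∧ (∀ x : S, G x = g x) ∧ Disjoint (tsupport F) (tsupport G) := by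
  have : CompactSpace S := isCompact_iff_compactSpace.mp hS
  have hcompact : ∀ φ : S → ℝ, IsCompact (Subtype.val '' tsupport φ) := fun φ =>
    (isClosed_tsupport φ).isCompact.image continuous_subtype_val
  obtain ⟨δ, hδ, hδfg⟩ := (Set.disjoint_image_of_injective Subtype.val_injective hfg)
    |>.exists_cthickenings (hcompact f) (hcompact g).isClosed
  obtain ⟨F, hF, hF0, hFf, hFs⟩ := exists_nonneg_extension_tsupport_subset hS.isClosed hf hf0 hδ
  obtain ⟨G, hG, hG0, hGg, hGs⟩ := exists_nonneg_extension_tsupport_subset hS.isClosed hg hg0 hδ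
  exact ⟨F, G, hF, hG, hF0, hG0, hFf, hGg, hδfg.mono hFs hGs⟩

end Extension

lemma exEn_clamp_le {X : Type*} (RF : ResistanceForm X) (f : X → ℝ) (c : ℝ) {M : ℝ}
    (hM : 0 < M) : exEn RF (fun x => min (max (f x - c) 0) M) ≤ exEn RF f := by
  by_cases hf : f ∈ RF.dom
  · obtain ⟨hclamp, hle⟩ := RF.markov_clamp hf c hM
    rw [exEn_of_mem hf, exEn_of_mem hclamp]
    exact EReal.coe_le_coe_iff.2 hle
  · simp [exEn, hf]

lemma tsupport_domRestrict_subset {B : Type*} [TopologicalSpace B] (S : Set B) (φ : B → ℝ) :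
    tsupport (S.domRestrict φ) ⊆ Subtype.val ⁻¹' tsupport φ :=
  tsupport_comp_subset_preimage φ continuous_subtype_val

section GammaConvergence

variable {B : Type*} [MetricSpace B]

lemma TendstoUniformly.exists_abs_sub_lt_tendsto_zero [CompactSpace B] {u : ℕ → B → ℝ} {F : B → ℝ}
    (hu : ∀ n, Continuous (u n)) (hF : Continuous F) (huF : TendstoUniformly u F atTop) :
    ∃ ε : ℕ → ℝ, Tendsto ε atTop (𝓝 0) ∧ ∀ n b, |u n b - F b| < ε n := by
  set d : ℕ → C(B, ℝ) := fun n => ⟨u n, hu n⟩ - ⟨F, hF⟩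
  have hd : Tendsto (fun n => ‖d n‖) atTop (𝓝 0) :=
    tendsto_iff_norm_sub_tendsto_zero.1 (ContinuousMap.tendsto_iff_tendstoUniformly.2 huF)
  refine ⟨fun n => ‖d n‖ + 1 / (n + 1), by
    simpa using hd.add tendsto_one_div_add_atTop_nhds_zero_nat, fun n b => ?_⟩
  have hb : |u n b - F b| ≤ ‖d n‖ := by
    simpa [d, Real.norm_eq_abs] using ContinuousMap.norm_coe_le_norm (d n) b
  have : (0 : ℝ) < 1 / (n + 1) := by positivity
  linarith

lemma exists_clamped_approx [CompactSpace B] {F : B → ℝ} (hF : Continuous F) (hF0 : 0 ≤ F)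
    {fs : ℕ → B → ℝ} (hfs : ∀ n, Continuous (fs n)) (hfsF : TendstoUniformly fs F atTop) :
    ∃ u : ℕ → B → ℝ, (∀ n, Continuous (u n)) ∧ TendstoUniformly u F atTop ∧
      (∀ n, Function.support (u n) ⊆ Function.support F) ∧
      ∀ (S : Set B) (RF : ResistanceForm S) n,
        exEn RF (S.domRestrict (u n)) ≤ exEn RF (S.domRestrict (fs n)) := by
  obtain ⟨ε, hε, hfsε⟩ := hfsF.exists_abs_sub_lt_tendsto_zero hfs hF
  obtain ⟨M, hM⟩ := (isCompact_range hF).bddAbove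
  have hFM : ∀ b, F b ≤ max M 1 := fun b => (hM ⟨b, rfl⟩).trans (le_max_left _ _)
  have hM1 : 0 < max M 1 := by positivity
  refine ⟨fun n b => min (max (fs n b - ε n) 0) (max M 1), fun n => by fun_prop, ?_,
    fun n b hb => ?_, fun S RF n => exEn_clamp_le RF _ (ε n) hM1⟩
  · refine Metric.tendstoUniformly_iff.2 fun δ hδ => ?_
    filter_upwards [hε.eventually (gt_mem_nhds (half_pos hδ))] with n hn b
    have hclamp : F b = min (max (F b) 0) (max M 1) := by
      rw [max_eq_left (show 0 ≤ F b from hF0 b), min_eq_left (hFM b)]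
    rw [Real.dist_eq, hclamp]
    calc _ ≤ |F b - (fs n b - ε n)| :=
          (abs_min_sub_min_le_max _ _ _ _).trans (by simpa using abs_max_sub_max_le_abs _ _ 0)
      _ < δ := by
        have := abs_lt.1 (hfsε n b)
        rw [abs_lt]
        constructor <;> linarith
  · have hpos : ε n < fs n b := by
      by_contra! hle
      exact hb (by simp [max_eq_right (sub_nonpos.2 hle), hM1.le])
    have := abs_lt.1 (hfsε n b)
    exact (show 0 < F b by linarith).ne'

variable {A : ℕ → Set B} {Ainf : Set B} {RF : (n : ℕ) → ResistanceForm (A n)}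
  {RFinf : ResistanceForm Ainf}

variable (A Ainf RF RFinf) in
def GammaLiminfInequality : Prop :=
  ∀ (g : ℕ → B → ℝ) (ginf : B → ℝ), (∀ n, Continuous (g n)) → Continuous ginf →
    TendstoUniformly g ginf atTop →
    exEn RFinf (Ainf.domRestrict ginf) ≤
      liminf (fun n => exEn (RF n) ((A n).domRestrict (g n))) atTop

variable (A Ainf RF RFinf) in
def HasRecoverySequences : Prop :=
  ∀ ginf : B → ℝ, Continuous ginf →
    ∃ g : ℕ → B → ℝ, (∀ n, Continuous (g n)) ∧ TendstoUniformly g ginf atTop ∧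
      Tendsto (fun n => exEn (RF n) ((A n).domRestrict (g n))) atTop
        (𝓝 (exEn RFinf (Ainf.domRestrict ginf)))

lemma en_add_smul_le_of_local (h₁ : GammaLiminfInequality A Ainf RF RFinf)
    (hlocal : ∀ n, IsLocalRF (RF n)) {F G : B → ℝ} (hF : Continuous F) (hG : Continuous G)
    (hFG : Disjoint (tsupport F) (tsupport G)) {u v : ℕ → B → ℝ}
    (hu : ∀ n, Continuous (u n)) (hv : ∀ n, Continuous (v n))
    (huF : TendstoUniformly u F atTop) (hvG : TendstoUniformly v G atTop)
    (hu_supp : ∀ n, Function.support (u n) ⊆ Function.support F)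
    (hv_supp : ∀ n, Function.support (v n) ⊆ Function.support G) {eF eG : ℝ}
    (hue : limsup (fun n => exEn (RF n) ((A n).domRestrict (u n))) atTop ≤ eF)
    (hve : limsup (fun n => exEn (RF n) ((A n).domRestrict (v n))) atTop ≤ eG) (σ : ℝ)
    (hW : Ainf.domRestrict (F + σ • G) ∈ RFinf.dom) :
    RFinf.en (Ainf.domRestrict (F + σ • G)) (Ainf.domRestrict (F + σ • G)) ≤
      eF + σ ^ 2 * eG := by
  refine le_of_forall_pos_le_add fun δ hδ => ?_
  set δ' := δ / (1 + σ ^ 2)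
  have hδ' : 0 < δ' := by positivity
  have hδδ' : δ' + σ ^ 2 * δ' = δ := by
    simp only [δ']
    field_simp
  have hbound : ∀ᶠ n in atTop, exEn (RF n) ((A n).domRestrict (u n + σ • v n))
      ≤ ((eF + σ ^ 2 * eG + δ : ℝ) : EReal) := by
    have hlt : ∀ e : ℝ, (e : EReal) < (e + δ' : ℝ) :=
      fun e => EReal.coe_lt_coe_iff.2 (lt_add_of_pos_right e hδ')
    filter_upwards [eventually_lt_of_limsup_lt (hue.trans_lt (hlt eF)),
      eventually_lt_of_limsup_lt (hve.trans_lt (hlt eG))] with n hun hvn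
    obtain ⟨hud, hun⟩ := exEn_lt_coe_iff.1 hun
    obtain ⟨hvd, hvn⟩ := exEn_lt_coe_iff.1 hvn
    have horth : (RF n).en ((A n).domRestrict (u n)) ((A n).domRestrict (v n)) = 0 := by
      refine hlocal n _ hud _ hvd ((hFG.preimage Subtype.val).mono ?_ ?_)
      · exact (tsupport_domRestrict_subset _ _).trans (Set.preimage_mono (closure_mono (hu_supp n)))
      · exact (tsupport_domRestrict_subset _ _).trans (Set.preimage_mono (closure_mono (hv_supp n)))
    have hsplit : (A n).domRestrict (u n + σ • v n)
        = (A n).domRestrict (u n) + σ • (A n).domRestrict (v n) := rfl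
    rw [hsplit, exEn_of_mem ((RF n).dom_add _ _ hud ((RF n).dom_smul σ _ hvd)),
      (RF n).en_add_smul_self σ hud hvd, horth, EReal.coe_le_coe_iff]
    nlinarith [sq_nonneg σ]
  have hlim := (h₁ _ _ (fun n => (hu n).add ((hv n).const_smul σ)) (hF.add (hG.const_smul σ))
    (huF.add ((uniformContinuous_const_smul σ).comp_tendstoUniformly hvG))).trans
    (liminf_le_of_frequently_le hbound.frequently)
  rwa [exEn_of_mem hW, EReal.coe_le_coe_iff] at hlim

lemma en_eq_zero_of_nonneg_of_disjoint [CompactSpace B] (hAinf : IsCompact Ainf)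
    (h₁ : GammaLiminfInequality A Ainf RF RFinf) (h₂ : HasRecoverySequences A Ainf RF RFinf)
    (hlocal : ∀ n, IsLocalRF (RF n)) {f g : Ainf → ℝ} (hf : f ∈ RFinf.dom) (hg : g ∈ RFinf.dom)
    (hfc : Continuous f) (hgc : Continuous g) (hf0 : 0 ≤ f) (hg0 : 0 ≤ g)
    (hfg : Disjoint (tsupport f) (tsupport g)) : RFinf.en f g = 0 := by
  obtain ⟨F, G, hF, hG, hF0, hG0, hFf, hGg, hFG⟩ :=
    exists_nonneg_extensions_disjoint_tsupport hAinf hfc hgc hf0 hg0 hfg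
  have hrestr : ∀ σ : ℝ, Ainf.domRestrict (F + σ • G) = f + σ • g := fun σ => funext fun x => by
    change F x + σ * G x = f x + σ * g x
    rw [hFf, hGg]
  obtain ⟨fs, hfs, hfsF, hfsE⟩ := h₂ F hF
  obtain ⟨gs, hgs, hgsG, hgsE⟩ := h₂ G hG
  obtain ⟨u, hu, huF, hu_supp, huE⟩ := exists_clamped_approx hF hF0 hfs hfsF
  obtain ⟨v, hv, hvG, hv_supp, hvE⟩ := exists_clamped_approx hG hG0 hgs hgsG
  have hue : limsup (fun n => exEn (RF n) ((A n).domRestrict (u n))) atTop ≤ RFinf.en f f := by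
    rw [← exEn_of_mem hf, ← (funext hFf : Ainf.domRestrict F = f), ← hfsE.limsup_eq]
    exact limsup_le_limsup (.of_forall fun n => huE (A n) (RF n) n)
  have hve : limsup (fun n => exEn (RF n) ((A n).domRestrict (v n))) atTop ≤ RFinf.en g g := by
    rw [← exEn_of_mem hg, ← (funext hGg : Ainf.domRestrict G = g), ← hgsE.limsup_eq]
    exact limsup_le_limsup (.of_forall fun n => hvE (A n) (RF n) n)
  have hbound : ∀ σ : ℝ,
      RFinf.en (f + σ • g) (f + σ • g) ≤ RFinf.en f f + σ ^ 2 * RFinf.en g g :=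
    fun σ => hrestr σ ▸ en_add_smul_le_of_local h₁ hlocal hF hG hFG hu hv huF hvG hu_supp hv_supp
      hue hve σ (hrestr σ ▸ RFinf.dom_add _ _ hf (RFinf.dom_smul σ g hg))
  have hplus := hbound 1
  have hminus := hbound (-1)
  rw [RFinf.en_add_smul_self _ hf hg] at hplus hminus
  linarith

end GammaConvergence

theorem stmt7_general {B : Type*} [MetricSpace B] [CompactSpace B]
    (A : ℕ → Set B) (Ainf : Set B)
    (hAinfc : IsCompact Ainf)
    (RF : (n : ℕ) → ResistanceForm ↥(A n)) (RFinf : ResistanceForm ↥Ainf)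
    (hdomcinf : ∀ f ∈ RFinf.dom, Continuous f)
    (hGamma₁ : ∀ (g : ℕ → B → ℝ) (ginf : B → ℝ),
      (∀ n, Continuous (g n)) → Continuous ginf →
      TendstoUniformly g ginf atTop →
      exEn RFinf (Ainf.restrict ginf) ≤
        Filter.liminf (fun n => exEn (RF n) ((A n).restrict (g n))) atTop)
    (hGamma₂ : ∀ ginf : B → ℝ, Continuous ginf →
      ∃ g : ℕ → B → ℝ, (∀ n, Continuous (g n)) ∧
        TendstoUniformly g ginf atTop ∧
        Tendsto (fun n => exEn (RF n) ((A n).restrict (g n))) atTop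
          (𝓝 (exEn RFinf (Ainf.restrict ginf))))
    (hlocal : ∀ n, IsLocalRF (RF n)) :
    IsLocalRF RFinf := by
  have : CompactSpace Ainf := isCompact_iff_compactSpace.mp hAinfc
  refine RFinf.isLocalRF_of_nonneg (fun f hf => (isCompact_range (hdomcinf f hf)).bddAbove) ?_
  intro f hf g hg hf0 hg0 hfg
  exact en_eq_zero_of_nonneg_of_disjoint hAinfc hGamma₁ hGamma₂ hlocal hf hg (hdomcinf f hf)
    (hdomcinf g hg) hf0 hg0 hfg

/-- Under setting (C1), if resistance forms `(E n, F n)` on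
`A n` with `F n ⊆ C(A n)` Γ-converge on `C(B)` to a resistance form `(E, F)`
on `A` with `F ⊆ C(A)`, and each `(E n, F n)` is local, then `(E, F)` is local. -/
theorem stmt7 {B : Type*} [MetricSpace B] [CompactSpace B]
    (A : ℕ → Set B) (Ainf : Set B)
    (hAc : ∀ n, IsCompact (A n)) (hAne : ∀ n, (A n).Nonempty)
    (hAinfc : IsCompact Ainf) (hAinfne : Ainf.Nonempty)
    (hH : Tendsto (fun n => Metric.hausdorffDist (A n) Ainf) atTop (𝓝 0))
    (RF : (n : ℕ) → ResistanceForm ↥(A n)) (RFinf : ResistanceForm ↥Ainf)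
    (hdomc : ∀ n, ∀ f ∈ (RF n).dom, Continuous f)
    (hdomcinf : ∀ f ∈ RFinf.dom, Continuous f)
    (hGamma₁ : ∀ (g : ℕ → B → ℝ) (ginf : B → ℝ),
      (∀ n, Continuous (g n)) → Continuous ginf →
      TendstoUniformly g ginf atTop →
      exEn RFinf (Ainf.restrict ginf) ≤
        Filter.liminf (fun n => exEn (RF n) ((A n).restrict (g n))) atTop)
    (hGamma₂ : ∀ ginf : B → ℝ, Continuous ginf →
      ∃ g : ℕ → B → ℝ, (∀ n, Continuous (g n)) ∧
        TendstoUniformly g ginf atTop ∧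
        Tendsto (fun n => exEn (RF n) ((A n).restrict (g n))) atTop
          (𝓝 (exEn RFinf (Ainf.restrict ginf))))
    (hlocal : ∀ n, IsLocalRF (RF n)) :
    IsLocalRF RFinf :=
  stmt7_general A Ainf hAinfc RF RFinf hdomcinf hGamma₁ hGamma₂ hlocal
end
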